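/- arXiv:2512.06618 — 8 statements merged into one kernel-verified Lean document; each statement's English description precedes it below -/
import Mathlib

section
/- Let A be an invertible n×n complex matrix, let ‖·‖₁ and ‖·‖₂ be unitarily invariant norms on the space of n×n complex matrices, and let H₁, H₂ be Hermitian n×n complex matrices. Then the function t ↦ log(‖e^{tH₁} A e^{-tH₂}‖₁) + log(‖e^{tH₂} A⁻¹ e^{-tH₁}‖₂) is convex on ℝ. (Equivalently, the log-condition-number function K(X,Y) ↦ log(‖XAY⁻¹‖₁·‖(XAY⁻¹)⁻¹‖₂) is geodesically convex along every geodesic t ↦ K(e^{tH₁}X, e^{tH₂}Y) of the symmetric space G/K.) -/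
/-!
For `z ∈ ℂ` put `f z = e^{z H₁} A e^{-z H₂}`, an entire matrix-valued function. Since
`e^{i y H}` is unitary for Hermitian `H` and real `y`, a unitarily invariant norm of `f z`
depends only on `Re z`. Hadamard's three-lines theorem on a vertical strip then says that
`t ↦ log ‖f t‖` is convex on `ℝ`. The theorem is the sum of this statement for `A` and for `A⁻¹`
(with `H₁` and `H₂` exchanged).
-/

open Matrix

/-- The matrix exponential of a square complex matrix. -/
noncomputable def mexp {k : ℕ} (A : Matrix (Fin k) (Fin k) ℂ) : Matrix (Fin k) (Fin k) ℂ :=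
  NormedSpace.exp A

/-- `N` is a unitarily invariant matrix norm on `m × n` complex matrices:
it is a norm and satisfies `N (U * A * V) = N A` for all unitary `U`, `V`. -/
structure IsUnitarilyInvariantNorm (m n : ℕ) (N : Matrix (Fin m) (Fin n) ℂ → ℝ) : Prop where
  eq_zero_iff : ∀ A, N A = 0 ↔ A = 0
  smul : ∀ (c : ℂ) (A), N (c • A) = ‖c‖ * N A
  triangle : ∀ A B, N (A + B) ≤ N A + N B
  unitary_inv : ∀ (U : Matrix (Fin m) (Fin m) ℂ) (V : Matrix (Fin n) (Fin n) ℂ),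
    U ∈ Matrix.unitaryGroup (Fin m) ℂ → V ∈ Matrix.unitaryGroup (Fin n) ℂ →
    ∀ A, N (U * A * V) = N A

open NormedSpace Complex.HadamardThreeLines Set

section ThreeLines

variable {E : Type*} [NormedAddCommGroup E] [NormedSpace ℂ E]

theorem norm_le_rpow_mul_rpow_of_norm_eq_norm_re {f : ℂ → E} (hf : Differentiable ℂ f)
    (hf_re : ∀ z, ‖f z‖ = ‖f z.re‖) (p q : ℝ) {u : ℝ} (hu₀ : 0 ≤ u) (hu₁ : u ≤ 1) :
    ‖f ((1 - u) * p + u * q : ℝ)‖ ≤ ‖f p‖ ^ (1 - u) * ‖f q‖ ^ u := by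
  set g : ℂ → E := fun z => f (p + z * (q - p))
  have hg_re (z : ℂ) : ‖g z‖ = ‖f (p + z.re * (q - p) : ℝ)‖ := by
    simp [g, hf_re (p + z * (q - p))]
  have hg_bdd : BddAbove ((norm ∘ g) '' verticalClosedStrip 0 1) := by
    have : Continuous fun x : ℝ => ‖f (p + x * (q - p) : ℝ)‖ :=
      (hf.continuous.comp (by fun_prop)).norm
    refine ((isCompact_Icc (a := (0 : ℝ)) (b := 1)).image this).bddAbove.mono ?_
    rintro _ ⟨z, hz, rfl⟩
    exact ⟨z.re, hz, (hg_re z).symm⟩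
  have h := norm_le_interp_of_mem_verticalClosedStrip₀₁' g (z := u) (a := ‖f p‖) (b := ‖f q‖)
    ⟨hu₀, hu₁⟩ (hf.comp (by fun_prop)).diffContOnCl hg_bdd
    (fun z (hz : z.re = 0) => by simp [hg_re, hz])
    (fun z (hz : z.re = 1) => by simp [hg_re, hz])
  rw [hg_re, Complex.ofReal_re] at h
  convert h using 4
  ring

theorem convexOn_log_norm_of_norm_eq_norm_re {f : ℂ → E} (hf : Differentiable ℂ f)
    (hf_re : ∀ z, ‖f z‖ = ‖f z.re‖) (hf₀ : ∀ x : ℝ, f x ≠ 0) :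
    ConvexOn ℝ univ fun x : ℝ => Real.log ‖f x‖ := by
  refine ⟨convex_univ, fun p _ q _ a u _ hu hau => ?_⟩
  obtain rfl : a = 1 - u := by linarith
  have hpos (x : ℝ) : 0 < ‖f x‖ := norm_pos_iff.2 (hf₀ x)
  calc Real.log ‖f ((1 - u) • p + u • q : ℝ)‖
      ≤ Real.log (‖f p‖ ^ (1 - u) * ‖f q‖ ^ u) :=
        Real.log_le_log (hpos _)
          (norm_le_rpow_mul_rpow_of_norm_eq_norm_re hf hf_re p q hu (by linarith))
    _ = (1 - u) • Real.log ‖f p‖ + u • Real.log ‖f q‖ := by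
        rw [Real.log_mul (Real.rpow_pos_of_pos (hpos p) _).ne'
          (Real.rpow_pos_of_pos (hpos q) _).ne', Real.log_rpow (hpos p), Real.log_rpow (hpos q),
          smul_eq_mul, smul_eq_mul]

end ThreeLines

section MatrixExp

variable {ι : Type*} [Fintype ι] [DecidableEq ι]

theorem Matrix.exp_ofReal_mul_I_smul_mem_unitaryGroup {H : Matrix ι ι ℂ} (hH : H.IsHermitian)
    (r : ℝ) : exp ((r * Complex.I : ℂ) • H) ∈ unitaryGroup ι ℂ := by
  have hskew : star ((r * Complex.I : ℂ) • H) = -((r * Complex.I : ℂ) • H) := by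
    rw [star_smul, hH.star_eq, ← neg_smul]
    simp
  rw [mem_unitaryGroup_iff, star_eq_conjTranspose, ← Matrix.exp_conjTranspose,
    ← star_eq_conjTranspose, hskew,
    ← Matrix.exp_add_of_commute _ _ ((Commute.refl ((r * Complex.I : ℂ) • H)).neg_right),
    add_neg_cancel, NormedSpace.exp_zero]

theorem Matrix.exp_smul_eq_exp_re_smul_mul (H : Matrix ι ι ℂ) (z : ℂ) :
    exp (z • H) = exp ((z.re : ℂ) • H) * exp ((z.im * Complex.I : ℂ) • H) := by
  rw [← Matrix.exp_add_of_commute _ _ (((Commute.refl H).smul_left _).smul_right _), ← add_smul,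
    Complex.re_add_im]

theorem Matrix.exp_smul_eq_mul_exp_re_smul (H : Matrix ι ι ℂ) (z : ℂ) :
    exp (z • H) = exp ((z.im * Complex.I : ℂ) • H) * exp ((z.re : ℂ) • H) := by
  rw [← Matrix.exp_add_of_commute _ _ (((Commute.refl H).smul_left _).smul_right _), ← add_smul,
    add_comm, Complex.re_add_im]

theorem differentiable_linearMap_exp_smul_mul_mul_exp_neg_smul {F : Type*}
    [NormedAddCommGroup F] [NormedSpace ℂ F] (L : Matrix ι ι ℂ →ₗ[ℂ] F) (A H₁ H₂ : Matrix ι ι ℂ) :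
    Differentiable ℂ fun z : ℂ => L (exp (z • H₁) * A * exp (-z • H₂)) := by
  let _ : NormedRing (Matrix ι ι ℂ) := Matrix.linftyOpNormedRing
  let _ : NormedAlgebra ℂ (Matrix ι ι ℂ) := Matrix.linftyOpNormedAlgebra
  have hexp (H : Matrix ι ι ℂ) : Differentiable ℂ fun z : ℂ => exp (z • H) :=
    fun z => (hasDerivAt_exp_smul_const H z).differentiableAt
  exact (LinearMap.toContinuousLinearMap L).differentiable.comp
    (((hexp H₁).mul_const A).mul ((hexp H₂).comp differentiable_neg))

end MatrixExp

/-- A copy of `α` on which `N` becomes the norm; the normed structure depends on a proof that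
`N` is a norm, so it is not an instance (see `IsUnitarilyInvariantNorm.normedAddCommGroup`). -/
def WithNorm {α : Type*} (_N : α → ℝ) : Type _ := α

namespace WithNorm

variable {α : Type*} (N : α → ℝ)

instance [AddCommGroup α] : AddCommGroup (WithNorm N) := ‹AddCommGroup α›

instance {R : Type*} [Semiring R] [AddCommGroup α] [Module R α] : Module R (WithNorm N) :=
  ‹Module R α›

def linearEquiv (R : Type*) [Semiring R] [AddCommGroup α] [Module R α] :
    α ≃ₗ[R] WithNorm N :=
  LinearEquiv.refl R α

end WithNorm

namespace IsUnitarilyInvariantNorm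

variable {m n : ℕ} {N : Matrix (Fin m) (Fin n) ℂ → ℝ}

theorem map_zero (hN : IsUnitarilyInvariantNorm m n N) : N 0 = 0 := (hN.eq_zero_iff 0).2 rfl

theorem map_neg (hN : IsUnitarilyInvariantNorm m n N) (A : Matrix (Fin m) (Fin n) ℂ) :
    N (-A) = N A := by
  simpa using hN.smul (-1) A

noncomputable abbrev normedAddCommGroup (hN : IsUnitarilyInvariantNorm m n N) :
    NormedAddCommGroup (WithNorm N) :=
  AddGroupNorm.toNormedAddCommGroup
    { toFun := N
      map_zero' := hN.map_zero
      add_le' := hN.triangle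
      neg' := hN.map_neg
      eq_zero_of_map_eq_zero' := fun A h => (hN.eq_zero_iff A).1 h }

noncomputable abbrev normedSpace (hN : IsUnitarilyInvariantNorm m n N) :
    letI := hN.normedAddCommGroup
    NormedSpace ℂ (WithNorm N) :=
  letI := hN.normedAddCommGroup
  ⟨fun c A => (hN.smul c A).le⟩

theorem map_exp_smul_mul_mul_exp_neg_smul (hN : IsUnitarilyInvariantNorm m n N)
    {H₁ : Matrix (Fin m) (Fin m) ℂ} {H₂ : Matrix (Fin n) (Fin n) ℂ}
    (hH₁ : H₁.IsHermitian) (hH₂ : H₂.IsHermitian) (A : Matrix (Fin m) (Fin n) ℂ) (z : ℂ) :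
    N (exp (z • H₁) * A * exp (-z • H₂)) =
      N (exp ((z.re : ℂ) • H₁) * A * exp (-(z.re : ℂ) • H₂)) := by
  rw [exp_smul_eq_mul_exp_re_smul H₁, exp_smul_eq_exp_re_smul_mul H₂, Complex.neg_re,
    Complex.ofReal_neg]
  convert hN.unitary_inv _ _ (exp_ofReal_mul_I_smul_mem_unitaryGroup hH₁ z.im)
    (exp_ofReal_mul_I_smul_mem_unitaryGroup hH₂ (-z).im) _ using 2
  simp only [Matrix.mul_assoc]

end IsUnitarilyInvariantNorm

theorem IsUnitarilyInvariantNorm.convexOn_log_mexp_smul_mul_mul_mexp_neg_smul {n : ℕ}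
    {N : Matrix (Fin n) (Fin n) ℂ → ℝ} (hN : IsUnitarilyInvariantNorm n n N)
    (A : Matrix (Fin n) (Fin n) ℂ) {H₁ H₂ : Matrix (Fin n) (Fin n) ℂ}
    (hH₁ : H₁.IsHermitian) (hH₂ : H₂.IsHermitian) :
    ConvexOn ℝ univ fun t : ℝ =>
      Real.log (N (mexp ((t : ℂ) • H₁) * A * mexp ((-t : ℂ) • H₂))) := by
  rcases eq_or_ne A 0 with rfl | hA
  · simpa using convexOn_const (Real.log (N 0)) convex_univ
  let _ := hN.normedAddCommGroup
  let _ := hN.normedSpace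
  refine convexOn_log_norm_of_norm_eq_norm_re
    (f := fun z => WithNorm.linearEquiv N ℂ (exp (z • H₁) * A * exp (-z • H₂)))
    (differentiable_linearMap_exp_smul_mul_mul_exp_neg_smul _ A H₁ H₂)
    (hN.map_exp_smul_mul_mul_exp_neg_smul hH₁ hH₂ A) fun _ hx =>
      hA <| (Matrix.isUnit_exp _).mul_right_eq_zero.1 <|
        (Matrix.isUnit_exp _).mul_left_eq_zero.1 hx

theorem logConditionNumber_convex_general (n : ℕ) (A : Matrix (Fin n) (Fin n) ℂ)
    (N₁ N₂ : Matrix (Fin n) (Fin n) ℂ → ℝ)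
    (hN₁ : IsUnitarilyInvariantNorm n n N₁) (hN₂ : IsUnitarilyInvariantNorm n n N₂)
    (H₁ H₂ : Matrix (Fin n) (Fin n) ℂ)
    (hH₁ : H₁.IsHermitian) (hH₂ : H₂.IsHermitian) :
    ConvexOn ℝ Set.univ (fun t : ℝ =>
      Real.log (N₁ (mexp ((t : ℂ) • H₁) * A * mexp ((-t : ℂ) • H₂))) +
      Real.log (N₂ (mexp ((t : ℂ) • H₂) * A⁻¹ * mexp ((-t : ℂ) • H₁)))) :=
  (hN₁.convexOn_log_mexp_smul_mul_mul_mexp_neg_smul A hH₁ hH₂).add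
    (hN₂.convexOn_log_mexp_smul_mul_mul_mexp_neg_smul A⁻¹ hH₂ hH₁)

/-- The log-condition-number function
`t ↦ log ‖e^{tH₁} A e^{-tH₂}‖₁ + log ‖e^{tH₂} A⁻¹ e^{-tH₁}‖₂` is convex on `ℝ`,
for any invertible `A`, unitarily invariant norms `‖·‖₁, ‖·‖₂`, and Hermitian `H₁, H₂`. -/
theorem logConditionNumber_convex (n : ℕ) (A : Matrix (Fin n) (Fin n) ℂ)
    (hA : IsUnit A)
    (N₁ N₂ : Matrix (Fin n) (Fin n) ℂ → ℝ)
    (hN₁ : IsUnitarilyInvariantNorm n n N₁) (hN₂ : IsUnitarilyInvariantNorm n n N₂)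
    (H₁ H₂ : Matrix (Fin n) (Fin n) ℂ)
    (hH₁ : H₁.IsHermitian) (hH₂ : H₂.IsHermitian) :
    ConvexOn ℝ Set.univ (fun t : ℝ =>
      Real.log (N₁ (mexp ((t : ℂ) • H₁) * A * mexp ((-t : ℂ) • H₂))) +
      Real.log (N₂ (mexp ((t : ℂ) • H₂) * A⁻¹ * mexp ((-t : ℂ) • H₁)))) :=
  logConditionNumber_convex_general n A N₁ N₂ hN₁ hN₂ H₁ H₂ hH₁ hH₂
end

section
/- (Heinz–Kato inequality for unitarily invariant norms.) Let A be an m×n complex matrix, let ‖·‖ be a unitarily invariant norm on the space of complex m×n matrices, let X be an m×m positive definite Hermitian matrix and Y an n×n positive definite Hermitian matrix. Then ‖√X · A · √Y‖² ≤ ‖A‖ · ‖X A Y‖, where √X and √Y denote the unique positive definite square roots of X and Y. -/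
open Matrix
open scoped ComplexOrder
open scoped MatrixOrder

/-!
The matrices `X ^ z` (defined through the spectral decomposition) are holomorphic in `z`, unitary
when `Re z = 0`, and satisfy `X ^ (z + w) = X ^ z * X ^ w`. Hence `f z = X ^ z * A * Y ^ z` is
holomorphic, and unitary invariance makes `‖f z‖` depend only on `Re z`: it equals `‖A‖` on the
line `Re z = 0` and `‖X * A * Y‖` on the line `Re z = 1`. Hadamard's three lines theorem at
`z = 1 / 2`, where `f z = √X * A * √Y`, gives `‖√X * A * √Y‖ ≤ ‖A‖ ^ (1/2) * ‖X * A * Y‖ ^ (1/2)`.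
-/

open Unitary

namespace Matrix.PosDef

variable {ι : Type*} [Fintype ι] [DecidableEq ι] {X : Matrix ι ι ℂ}

noncomputable def cpow (hX : X.PosDef) (z : ℂ) : Matrix ι ι ℂ :=
  conjStarAlgAut ℂ _ hX.1.eigenvectorUnitary (diagonal fun i ↦ (hX.1.eigenvalues i : ℂ) ^ z)

lemma cpow_eq_sum (hX : X.PosDef) (z : ℂ) : hX.cpow z =
    ∑ i, (hX.1.eigenvalues i : ℂ) ^ z •
      conjStarAlgAut ℂ _ hX.1.eigenvectorUnitary (single i i 1) := by
  simp only [cpow, ← sum_single_eq_diagonal, map_sum, ← map_smul, smul_single, smul_eq_mul, mul_one]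

lemma ofReal_eigenvalues_ne_zero (hX : X.PosDef) (i : ι) : (hX.1.eigenvalues i : ℂ) ≠ 0 :=
  mod_cast (hX.eigenvalues_pos i).ne'

lemma cpow_add (hX : X.PosDef) (z w : ℂ) : hX.cpow (z + w) = hX.cpow z * hX.cpow w := by
  simp only [cpow, ← map_mul, diagonal_mul_diagonal,
    Complex.cpow_add _ _ (hX.ofReal_eigenvalues_ne_zero _)]

lemma cpow_zero (hX : X.PosDef) : hX.cpow 0 = 1 := by
  simp [cpow]

lemma cpow_one (hX : X.PosDef) : hX.cpow 1 = X := by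
  conv_rhs => rw [hX.1.spectral_theorem]
  simp [cpow, Function.comp_def]

lemma cpow_one_div_two (hX : X.PosDef) : hX.cpow (1 / 2) = CFC.sqrt X := by
  rw [CFC.sqrt_eq_real_sqrt X hX.posSemidef.nonneg, cfcₙ_eq_cfc, hX.1.cfc_eq, IsHermitian.cfc, cpow]
  congr 2
  ext i
  simp [Real.sqrt_eq_rpow, Complex.ofReal_cpow (hX.eigenvalues_pos i).le]

lemma cpow_mem_unitaryGroup (hX : X.PosDef) {z : ℂ} (hz : z.re = 0) :
    hX.cpow z ∈ unitaryGroup ι ℂ := by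
  refine Unitary.map_mem (conjStarAlgAut ℂ _ hX.1.eigenvectorUnitary) ?_
  rw [mem_unitaryGroup_iff, star_eq_conjTranspose, diagonal_conjTranspose, diagonal_mul_diagonal,
    ← diagonal_one]
  congr 1
  ext i
  rw [Pi.star_apply, Complex.star_def, Complex.mul_conj, Complex.normSq_eq_norm_sq,
    Complex.norm_cpow_eq_rpow_re_of_pos (hX.eigenvalues_pos i), hz]
  simp

end Matrix.PosDef

section HeinzKato

open Complex.HadamardThreeLines

variable {m n E : Type*} [Fintype m] [DecidableEq m] [Fintype n] [DecidableEq n]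
  [NormedAddCommGroup E] [NormedSpace ℂ E] (L : Matrix m n ℂ →ₗ[ℂ] E) (A : Matrix m n ℂ)
  {X : Matrix m m ℂ} {Y : Matrix n n ℂ}

lemma differentiable_cpow_mul_mul_cpow (hX : X.PosDef) (hY : Y.PosDef) :
    Differentiable ℂ fun z ↦ L (hX.cpow z * A * hY.cpow z) := by
  simp only [Matrix.PosDef.cpow_eq_sum, Matrix.sum_mul, Matrix.mul_sum, Matrix.smul_mul,
    Matrix.mul_smul, map_sum, map_smul]
  fun_prop (disch := simp [hX.ofReal_eigenvalues_ne_zero, hY.ofReal_eigenvalues_ne_zero])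

lemma norm_cpow_mul_mul_cpow_eq_re (hX : X.PosDef) (hY : Y.PosDef)
    (hL : ∀ U ∈ unitaryGroup m ℂ, ∀ V ∈ unitaryGroup n ℂ, ∀ B, ‖L (U * B * V)‖ = ‖L B‖) (z : ℂ) :
    ‖L (hX.cpow z * A * hY.cpow z)‖ = ‖L (hX.cpow z.re * A * hY.cpow z.re)‖ := by
  set w : ℂ := z.im * Complex.I
  have hw : w.re = 0 := by simp [w]
  have hXz : hX.cpow z = hX.cpow w * hX.cpow z.re := by
    rw [← hX.cpow_add, add_comm, Complex.re_add_im]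
  have hYz : hY.cpow z = hY.cpow z.re * hY.cpow w := by
    rw [← hY.cpow_add, Complex.re_add_im]
  rw [hXz, hYz, ← hL _ (hX.cpow_mem_unitaryGroup hw) _ (hY.cpow_mem_unitaryGroup hw)
    (hX.cpow z.re * A * hY.cpow z.re)]
  simp only [Matrix.mul_assoc]

theorem norm_sqrt_mul_mul_sqrt_sq_le (hX : X.PosDef) (hY : Y.PosDef)
    (hL : ∀ U ∈ unitaryGroup m ℂ, ∀ V ∈ unitaryGroup n ℂ, ∀ B, ‖L (U * B * V)‖ = ‖L B‖) :
    ‖L (CFC.sqrt X * A * CFC.sqrt Y)‖ ^ 2 ≤ ‖L A‖ * ‖L (X * A * Y)‖ := by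
  set f : ℂ → E := fun z ↦ L (hX.cpow z * A * hY.cpow z)
  have hre (z : ℂ) : ‖f z‖ = ‖f z.re‖ := norm_cpow_mul_mul_cpow_eq_re L A hX hY hL z
  have hd : Differentiable ℂ f := differentiable_cpow_mul_mul_cpow L A hX hY
  -- `hre` reduces boundedness on the strip to boundedness on the compact segment `[0, 1]`.
  have hB : BddAbove ((norm ∘ f) '' verticalClosedStrip 0 1) := by
    have hcont : Continuous fun t : ℝ ↦ ‖f t‖ :=
      continuous_norm.comp (hd.continuous.comp Complex.continuous_ofReal)
    refine ((isCompact_Icc (a := (0 : ℝ)) (b := 1)).image_of_continuousOn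
      hcont.continuousOn).bddAbove.mono ?_
    rintro _ ⟨z, hz, rfl⟩
    exact ⟨z.re, hz, (hre z).symm⟩
  have h0 (z : ℂ) (hz : z ∈ Complex.re ⁻¹' {0}) : ‖f z‖ ≤ ‖L A‖ := by
    rw [hre, show z.re = 0 from hz]
    simp [f, Matrix.PosDef.cpow_zero]
  have h1 (z : ℂ) (hz : z ∈ Complex.re ⁻¹' {1}) : ‖f z‖ ≤ ‖L (X * A * Y)‖ := by
    rw [hre, show z.re = 1 from hz]
    simp [f, Matrix.PosDef.cpow_one]
  have hhalf := norm_le_interp_of_mem_verticalClosedStrip₀₁' f (z := 1 / 2)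
    (by norm_num [verticalClosedStrip]) hd.diffContOnCl hB h0 h1
  norm_num [f, ← Real.sqrt_eq_rpow, Matrix.PosDef.cpow_one_div_two] at hhalf
  calc ‖L (CFC.sqrt X * A * CFC.sqrt Y)‖ ^ 2 ≤ (√‖L A‖ * √‖L (X * A * Y)‖) ^ 2 :=
        pow_le_pow_left₀ (norm_nonneg _) hhalf 2
    _ = ‖L A‖ * ‖L (X * A * Y)‖ := by
        rw [mul_pow, Real.sq_sqrt (norm_nonneg _), Real.sq_sqrt (norm_nonneg _)]

end HeinzKato

namespace IsUnitarilyInvariantNorm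

variable {m n : ℕ} {N : Matrix (Fin m) (Fin n) ℂ → ℝ}

def toAddGroupNorm (hN : IsUnitarilyInvariantNorm m n N) :
    AddGroupNorm (Matrix (Fin m) (Fin n) ℂ) where
  toFun := N
  map_zero' := by simpa using hN.smul 0 0
  add_le' := hN.triangle
  neg' A := by simpa using hN.smul (-1) A
  eq_zero_of_map_eq_zero' A := (hN.eq_zero_iff A).1

end IsUnitarilyInvariantNorm

/-- **Heinz–Kato inequality** for unitarily invariant norms:
`‖√X · A · √Y‖² ≤ ‖A‖ · ‖X A Y‖` for positive definite `X`, `Y`,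
where `√X`, `√Y` are the positive (semi)definite square roots. -/
theorem heinz_kato (m n : ℕ) (A : Matrix (Fin m) (Fin n) ℂ)
    (N : Matrix (Fin m) (Fin n) ℂ → ℝ) (hN : IsUnitarilyInvariantNorm m n N)
    (X : Matrix (Fin m) (Fin m) ℂ) (Y : Matrix (Fin n) (Fin n) ℂ)
    (hX : X.PosDef) (hY : Y.PosDef) :
    N (CFC.sqrt X * A * CFC.sqrt Y) ^ 2 ≤ N A * N (X * A * Y) := by
  -- There is no global norm on matrices, so `N` can serve as the norm of the matrix space itself.
  let := hN.toAddGroupNorm.toNormedAddCommGroup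
  let : NormedSpace ℂ (Matrix (Fin m) (Fin n) ℂ) := ⟨fun c B ↦ (hN.smul c B).le⟩
  exact norm_sqrt_mul_mul_sqrt_sq_le LinearMap.id A hX hY
    fun U hU V hV ↦ hN.unitary_inv U V hU hV
end

section
/- (Gradient of the log-Frobenius-condition number.) Let B be an invertible n×n complex matrix and let H₁, H₂ be Hermitian n×n complex matrices. Then the function φ(t) = log ‖e^{tH₁} B e^{-tH₂}‖_F + log ‖e^{tH₂} B⁻¹ e^{-tH₁}‖_F is differentiable at t = 0, and φ'(0) = Re tr(H₁ P) + Re tr(H₂ Q), where P = B B*/‖B‖_F² − (B⁻¹)* B⁻¹/‖B⁻¹‖_F² and Q = −B* B/‖B‖_F² + B⁻¹ (B⁻¹)*/‖B⁻¹‖_F². -/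
open Matrix

/-- The Frobenius norm `‖A‖_F = √(tr(A*A))` of a complex matrix. -/
noncomputable def frob {m n : ℕ} (A : Matrix (Fin m) (Fin n) ℂ) : ℝ :=
  Real.sqrt (Matrix.trace (Aᴴ * A)).re

/-!
Along `F(t) = e^{tH₁} B e^{-tH₂}` one has `F'(0) = H₁B - BH₂`, and
`d/dt log ‖F‖_F = Re tr(F* F') / ‖F‖_F²` because `‖F‖_F² = Re tr(F* F)` is a real quadratic form.
Cycling the trace turns `Re tr(B*(H₁B - BH₂))` into `Re tr(H₁ BB*) - Re tr(H₂ B*B)`; the `B⁻¹`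
term is the same computation with `H₁` and `H₂` exchanged.
-/

-- `mexp` and `frob` do not depend on a norm; this one only makes `HasDerivAt` available for
-- matrix-valued functions.
attribute [local instance] Matrix.linftyOpNormedAddCommGroup Matrix.linftyOpNormedRing
  Matrix.linftyOpNormedAlgebra

section Trace

open scoped ComplexOrder

variable {m n : Type*} [Fintype m] [Fintype n]

theorem re_trace_conjTranspose_mul_comm (A C : Matrix n n ℂ) :
    (trace (Cᴴ * A)).re = (trace (Aᴴ * C)).re := by
  rw [← conjTranspose_conjTranspose A, ← conjTranspose_mul, trace_conjTranspose,
    conjTranspose_conjTranspose, Complex.star_def, Complex.conj_re]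

theorem re_trace_conjTranspose_mul_self_nonneg (A : Matrix m n ℂ) :
    0 ≤ (trace (Aᴴ * A)).re :=
  (Complex.nonneg_iff.1 (posSemidef_conjTranspose_mul_self A).trace_nonneg).1

theorem re_trace_conjTranspose_mul_self_pos {A : Matrix m n ℂ} (hA : A ≠ 0) :
    0 < (trace (Aᴴ * A)).re := by
  have hne : trace (Aᴴ * A) ≠ 0 := mt trace_conjTranspose_mul_self_eq_zero_iff.1 hA
  exact (Complex.lt_def.1 <|
    (posSemidef_conjTranspose_mul_self A).trace_nonneg.lt_of_ne hne.symm).1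

theorem HasDerivAt.re_trace_conjTranspose_mul_self [DecidableEq n] {F : ℝ → Matrix n n ℂ}
    {F' : Matrix n n ℂ} {t : ℝ} (hF : HasDerivAt F F' t) :
    HasDerivAt (fun s => (trace ((F s)ᴴ * F s)).re) (2 * (trace ((F t)ᴴ * F')).re) t := by
  -- Mathlib's `ContinuousStar` instance on matrices is for the product topology.
  have : @ContinuousStar (Matrix n n ℂ)
      (PseudoMetricSpace.toUniformSpace.toTopologicalSpace : TopologicalSpace (Matrix n n ℂ)) _ :=
    ⟨continuous_id.matrix_conjTranspose⟩
  have htrace := ((traceLinearMap n ℂ ℂ).restrictScalars ℝ).toContinuousLinearMap.hasFDerivAt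
    |>.comp_hasDerivAt t (hF.star.fun_mul hF)
  refine (Complex.reCLM.hasFDerivAt.comp_hasDerivAt t htrace).congr_deriv ?_
  change (trace (star F' * F t + star (F t) * F')).re = _
  rw [star_eq_conjTranspose, star_eq_conjTranspose, trace_add, Complex.add_re,
    re_trace_conjTranspose_mul_comm, two_mul]

end Trace

section Frobenius

variable {k : ℕ}

theorem frob_sq {m n : ℕ} (A : Matrix (Fin m) (Fin n) ℂ) : frob A ^ 2 = (trace (Aᴴ * A)).re :=
  Real.sq_sqrt (re_trace_conjTranspose_mul_self_nonneg A)

theorem HasDerivAt.log_frob {F : ℝ → Matrix (Fin k) (Fin k) ℂ} {F' : Matrix (Fin k) (Fin k) ℂ}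
    {t : ℝ} (hF : HasDerivAt F F' t) (hFt : F t ≠ 0) :
    HasDerivAt (fun s => Real.log (frob (F s))) ((trace ((F t)ᴴ * F')).re / frob (F t) ^ 2) t := by
  have hlog := (hF.re_trace_conjTranspose_mul_self.log
    (re_trace_conjTranspose_mul_self_pos hFt).ne').div_const 2
  have hfun : (fun s => Real.log (frob (F s))) = fun s => Real.log (trace ((F s)ᴴ * F s)).re / 2 :=
    funext fun s => Real.log_sqrt (re_trace_conjTranspose_mul_self_nonneg (F s))
  rw [hfun, frob_sq]
  refine hlog.congr_deriv ?_
  ring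

theorem mexp_zero : mexp (0 : Matrix (Fin k) (Fin k) ℂ) = 1 :=
  NormedSpace.exp_zero

theorem hasDerivAt_mexp_ofReal_smul (H : Matrix (Fin k) (Fin k) ℂ) :
    HasDerivAt (fun t : ℝ => mexp ((t : ℂ) • H)) H 0 := by
  have h := hasDerivAt_exp_smul_const (𝕂 := ℝ) H 0
  simp only [zero_smul, NormedSpace.exp_zero, one_mul] at h
  have he : (fun t : ℝ => mexp ((t : ℂ) • H)) = fun t : ℝ => NormedSpace.exp (t • H) :=
    funext fun t => by rw [mexp, Complex.coe_smul]
  rw [he]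
  exact h

theorem hasDerivAt_mexp_neg_ofReal_smul (H : Matrix (Fin k) (Fin k) ℂ) :
    HasDerivAt (fun t : ℝ => mexp ((-t : ℂ) • H)) (-H) 0 := by
  simpa only [neg_smul, smul_neg] using hasDerivAt_mexp_ofReal_smul (-H)

theorem hasDerivAt_mexp_mul_mul_mexp_neg (H₁ B H₂ : Matrix (Fin k) (Fin k) ℂ) :
    HasDerivAt (fun t : ℝ => mexp ((t : ℂ) • H₁) * B * mexp ((-t : ℂ) • H₂))
      (H₁ * B - B * H₂) 0 := by
  have h := ((hasDerivAt_mexp_ofReal_smul H₁).mul_const B).fun_mul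
    (hasDerivAt_mexp_neg_ofReal_smul H₂)
  simp only [Complex.ofReal_zero, neg_zero, zero_smul, mexp_zero, mul_one, one_mul, mul_neg,
    ← sub_eq_add_neg] at h
  exact h

theorem hasDerivAt_log_frob_mexp_mul_mul_mexp_neg (H₁ B H₂ : Matrix (Fin k) (Fin k) ℂ) :
    HasDerivAt (fun t : ℝ => Real.log (frob (mexp ((t : ℂ) • H₁) * B * mexp ((-t : ℂ) • H₂))))
      (((trace (H₁ * (B * Bᴴ))).re - (trace (H₂ * (Bᴴ * B))).re) / frob B ^ 2) 0 := by
  rcases eq_or_ne B 0 with rfl | hB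
  · simpa [frob] using hasDerivAt_const (0 : ℝ) (0 : ℝ)
  have h := (hasDerivAt_mexp_mul_mul_mexp_neg H₁ B H₂).log_frob
    (by simpa only [Complex.ofReal_zero, neg_zero, zero_smul, mexp_zero, mul_one, one_mul])
  simp only [Complex.ofReal_zero, neg_zero, zero_smul, mexp_zero, mul_one, one_mul] at h
  refine h.congr_deriv ?_
  have h₁ : trace (Bᴴ * (H₁ * B)) = trace (H₁ * (B * Bᴴ)) := by
    rw [← mul_assoc, trace_mul_cycle, trace_mul_comm]
  have h₂ : trace (Bᴴ * (B * H₂)) = trace (H₂ * (Bᴴ * B)) := by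
    rw [← mul_assoc, trace_mul_comm]
  rw [mul_sub, trace_sub, Complex.sub_re, h₁, h₂]

end Frobenius

theorem grad_log_kappaF_general (n : ℕ) (B : Matrix (Fin n) (Fin n) ℂ)
    (H₁ H₂ : Matrix (Fin n) (Fin n) ℂ) :
    HasDerivAt (fun t : ℝ =>
        Real.log (frob (mexp ((t : ℂ) • H₁) * B * mexp ((-t : ℂ) • H₂))) +
        Real.log (frob (mexp ((t : ℂ) • H₂) * B⁻¹ * mexp ((-t : ℂ) • H₁))))
      ((Matrix.trace (H₁ *
          (((frob B ^ 2 : ℝ) : ℂ)⁻¹ • (B * Bᴴ) -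
            ((frob B⁻¹ ^ 2 : ℝ) : ℂ)⁻¹ • ((B⁻¹)ᴴ * B⁻¹)))).re +
       (Matrix.trace (H₂ *
          (-(((frob B ^ 2 : ℝ) : ℂ)⁻¹ • (Bᴴ * B)) +
            ((frob B⁻¹ ^ 2 : ℝ) : ℂ)⁻¹ • (B⁻¹ * (B⁻¹)ᴴ)))).re)
      0 := by
  refine ((hasDerivAt_log_frob_mexp_mul_mul_mexp_neg H₁ B H₂).add
    (hasDerivAt_log_frob_mexp_mul_mul_mexp_neg H₂ B⁻¹ H₁)).congr_deriv ?_
  simp only [mul_sub, mul_add, mul_neg, Matrix.mul_smul, trace_sub, trace_add, trace_neg,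
    trace_smul, smul_eq_mul, ← Complex.ofReal_inv, Complex.add_re, Complex.sub_re,
    Complex.neg_re, Complex.re_ofReal_mul]
  ring

/-- **Gradient of the log-Frobenius condition number.**  For an invertible `B` and Hermitian
`H₁, H₂`, the function `φ(t) = log ‖e^{tH₁} B e^{-tH₂}‖_F + log ‖e^{tH₂} B⁻¹ e^{-tH₁}‖_F`
is differentiable at `0` with
`φ'(0) = Re tr(H₁ P) + Re tr(H₂ Q)`, where
`P = B B*/‖B‖_F² − (B⁻¹)* B⁻¹/‖B⁻¹‖_F²` and `Q = −B* B/‖B‖_F² + B⁻¹(B⁻¹)*/‖B⁻¹‖_F²`. -/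
theorem grad_log_kappaF (n : ℕ) (B : Matrix (Fin n) (Fin n) ℂ) (hB : IsUnit B)
    (H₁ H₂ : Matrix (Fin n) (Fin n) ℂ) (hH₁ : H₁.IsHermitian) (hH₂ : H₂.IsHermitian) :
    HasDerivAt (fun t : ℝ =>
        Real.log (frob (mexp ((t : ℂ) • H₁) * B * mexp ((-t : ℂ) • H₂))) +
        Real.log (frob (mexp ((t : ℂ) • H₂) * B⁻¹ * mexp ((-t : ℂ) • H₁))))
      ((Matrix.trace (H₁ *
          (((frob B ^ 2 : ℝ) : ℂ)⁻¹ • (B * Bᴴ) -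
            ((frob B⁻¹ ^ 2 : ℝ) : ℂ)⁻¹ • ((B⁻¹)ᴴ * B⁻¹)))).re +
       (Matrix.trace (H₂ *
          (-(((frob B ^ 2 : ℝ) : ℂ)⁻¹ • (Bᴴ * B)) +
            ((frob B⁻¹ ^ 2 : ℝ) : ℂ)⁻¹ • (B⁻¹ * (B⁻¹)ᴴ)))).re)
      0 :=
  grad_log_kappaF_general n B H₁ H₂
end

section
/- (Hessian of the log-Frobenius-condition number under left multiplication.) Let A be an invertible n×n complex matrix, let H be a Hermitian n×n complex matrix, and set P = AA*. Then the function φ(t) = log ‖e^{tH} A‖_F + log ‖A⁻¹ e^{-tH}‖_F is twice differentiable at t = 0 and (1/2)·φ''(0) = Re tr(H²P)/tr(P) − (Re tr(HP))²/(tr P)² + Re tr(H²P⁻¹)/tr(P⁻¹) − (Re tr(HP⁻¹))²/(tr P⁻¹)², where tr(P) and tr(P⁻¹) denote the (real, positive) traces of the positive definite matrices P and P⁻¹. -/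
open Matrix

/-!
For Hermitian `H`, `‖e^{tH} B‖_F² = Re tr(e^{2tH} B B*)`, and taking adjoints,
`‖A⁻¹ e^{-tH}‖_F² = Re tr(e^{-2tH} P⁻¹)`. So `2φ` is the sum of the logarithms of two positive
functions of the form `f(t) = Re tr(e^{tC} S)`, whose derivative `Re tr(e^{tC} C S)` is again of
that form. The Hessian is then `(f''(0) f(0) - f'(0)²) / f(0)²` with `C = ±2H` and `S = P, P⁻¹`.
-/

open NormedSpace
open scoped ComplexOrder

section Frobenius

variable {m n : ℕ}

theorem frob_conjTranspose (M : Matrix (Fin m) (Fin n) ℂ) : frob Mᴴ = frob M := by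
  rw [frob, frob, conjTranspose_conjTranspose, trace_mul_comm]

theorem log_frob (M : Matrix (Fin m) (Fin n) ℂ) :
    Real.log (frob M) = Real.log (Mᴴ * M).trace.re / 2 :=
  Real.log_sqrt (Complex.nonneg_iff.1 (posSemidef_conjTranspose_mul_self M).trace_nonneg).1

theorem re_trace_conjTranspose_mul_self_pos_s7 {M : Matrix (Fin m) (Fin n) ℂ} (hM : M ≠ 0) :
    0 < (Mᴴ * M).trace.re :=
  (Complex.pos_iff.1 <| (posSemidef_conjTranspose_mul_self M).trace_nonneg.lt_of_ne
    (Ne.symm (trace_conjTranspose_mul_self_eq_zero_iff.not.2 hM))).1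

end Frobenius

section TraceExp

variable {n : ℕ}

noncomputable def traceExpRe (C S : Matrix (Fin n) (Fin n) ℂ) (t : ℝ) : ℝ :=
  (exp (t • C) * S).trace.re

theorem traceExpRe_zero (C S : Matrix (Fin n) (Fin n) ℂ) : traceExpRe C S 0 = S.trace.re := by
  rw [traceExpRe, zero_smul, exp_zero, one_mul]

theorem traceExpRe_neg (C S : Matrix (Fin n) (Fin n) ℂ) (t : ℝ) :
    traceExpRe (-C) S t = traceExpRe C S (-t) := by
  rw [traceExpRe, traceExpRe, smul_neg, neg_smul]

-- `hasDerivAt_exp_smul_const'` needs a normed algebra; every matrix norm gives the product topology.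
attribute [local instance] Matrix.linftyOpNormedRing Matrix.linftyOpNormedAlgebra in
theorem hasDerivAt_traceExpRe (C S : Matrix (Fin n) (Fin n) ℂ) (t : ℝ) :
    HasDerivAt (traceExpRe C S) (traceExpRe C (C * S) t) t := by
  let reTrace : Matrix (Fin n) (Fin n) ℂ →L[ℝ] ℝ := LinearMap.toContinuousLinearMap
    (Complex.reLm.comp ((traceLinearMap (Fin n) ℂ ℂ).restrictScalars ℝ))
  have h := reTrace.hasFDerivAt.comp_hasDerivAt t
    ((hasDerivAt_exp_smul_const' (𝕂 := ℝ) C t).mul_const S)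
  have hderiv : reTrace (C * exp (t • C) * S) = traceExpRe C (C * S) t := by
    show (C * exp (t • C) * S).trace.re = (exp (t • C) * (C * S)).trace.re
    rw [((Commute.refl C).smul_right t).exp_right.eq, mul_assoc]
  exact h.congr_deriv hderiv

theorem hasDerivAt_log_traceExpRe {C S : Matrix (Fin n) (Fin n) ℂ} {t : ℝ}
    (hpos : 0 < traceExpRe C S t) :
    HasDerivAt (fun t => Real.log (traceExpRe C S t))
      (traceExpRe C (C * S) t / traceExpRe C S t) t :=
  (hasDerivAt_traceExpRe C S t).log hpos.ne'

theorem hasDerivAt_logDeriv_traceExpRe_zero (C S : Matrix (Fin n) (Fin n) ℂ)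
    (hS : S.trace.re ≠ 0) :
    HasDerivAt (fun t => traceExpRe C (C * S) t / traceExpRe C S t)
      (((C * (C * S)).trace.re * S.trace.re - (C * S).trace.re ^ 2) / S.trace.re ^ 2) 0 := by
  have h := (hasDerivAt_traceExpRe C (C * S) 0).div (hasDerivAt_traceExpRe C S 0)
    (by rwa [traceExpRe_zero])
  rw [traceExpRe_zero, traceExpRe_zero, traceExpRe_zero] at h
  exact h.congr_deriv (by ring)

end TraceExp

theorem inv_mul_conjTranspose_self {ι R : Type*} [Fintype ι] [DecidableEq ι] [CommRing R]
    [StarRing R] (A : Matrix ι ι R) : (A * Aᴴ)⁻¹ = A⁻¹ᴴ * A⁻¹ := by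
  rw [Matrix.mul_inv_rev, conjTranspose_nonsing_inv]

section Hermitian

variable {m n : ℕ} {H : Matrix (Fin n) (Fin n) ℂ}

theorem Matrix.IsHermitian.conjTranspose_mexp_real_smul (hH : H.IsHermitian) (s : ℝ) :
    (mexp ((s : ℂ) • H))ᴴ = mexp ((s : ℂ) • H) :=
  (hH.smul (k := (s : ℂ)) (Complex.conj_ofReal s)).exp

theorem Matrix.IsHermitian.traceExpRe_two_smul (hH : H.IsHermitian) (s : ℝ)
    (B : Matrix (Fin n) (Fin m) ℂ) :
    traceExpRe ((2 : ℝ) • H) (B * Bᴴ) s =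
      ((mexp ((s : ℂ) • H) * B)ᴴ * (mexp ((s : ℂ) • H) * B)).trace.re := by
  have hsq : mexp ((s : ℂ) • H) * mexp ((s : ℂ) • H) = NormedSpace.exp (s • (2 : ℝ) • H) := by
    rw [mexp, ← Matrix.exp_add_of_commute _ _ (Commute.refl _), Complex.coe_smul]
    congr 1
    module
  rw [traceExpRe, ← hsq, conjTranspose_mul, hH.conjTranspose_mexp_real_smul, Matrix.mul_assoc Bᴴ,
    trace_mul_comm Bᴴ]
  simp only [Matrix.mul_assoc]

theorem Matrix.IsHermitian.traceExpRe_two_smul_pos [NeZero n] (hH : H.IsHermitian)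
    {B : Matrix (Fin n) (Fin n) ℂ} (hB : IsUnit B) (s : ℝ) :
    0 < traceExpRe ((2 : ℝ) • H) (B * Bᴴ) s := by
  rw [hH.traceExpRe_two_smul]
  exact re_trace_conjTranspose_mul_self_pos_s7 ((Matrix.isUnit_exp _).mul hB).ne_zero

theorem Matrix.IsHermitian.traceExpRe_neg_two_smul_pos [NeZero n] (hH : H.IsHermitian)
    {B : Matrix (Fin n) (Fin n) ℂ} (hB : IsUnit B) (t : ℝ) :
    0 < traceExpRe (-((2 : ℝ) • H)) (Bᴴ * B) t := by
  simpa [traceExpRe_neg, star_eq_conjTranspose] using hH.traceExpRe_two_smul_pos hB.star (-t)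

theorem Matrix.IsHermitian.log_frob_mexp_real_smul_mul (hH : H.IsHermitian) (s : ℝ)
    (B : Matrix (Fin n) (Fin m) ℂ) :
    Real.log (frob (mexp ((s : ℂ) • H) * B)) =
      Real.log (traceExpRe ((2 : ℝ) • H) (B * Bᴴ) s) / 2 := by
  rw [log_frob, hH.traceExpRe_two_smul]

theorem Matrix.IsHermitian.log_frob_mul_mexp_neg_smul (hH : H.IsHermitian) (t : ℝ)
    (B : Matrix (Fin m) (Fin n) ℂ) :
    Real.log (frob (B * mexp ((-t : ℂ) • H))) =
      Real.log (traceExpRe (-((2 : ℝ) • H)) (Bᴴ * B) t) / 2 := by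
  rw [← Complex.ofReal_neg, ← frob_conjTranspose, conjTranspose_mul,
    hH.conjTranspose_mexp_real_smul, hH.log_frob_mexp_real_smul_mul, traceExpRe_neg,
    conjTranspose_conjTranspose]

end Hermitian

/-- **Hessian of the log-Frobenius condition number under left multiplication.**
For invertible `A`, Hermitian `H`, and `P = AA*`, the function
`φ(t) = log ‖e^{tH} A‖_F + log ‖A⁻¹ e^{-tH}‖_F` is twice differentiable at `0` and
`(1/2)·φ''(0) = Re tr(H²P)/tr(P) − (Re tr(HP))²/(tr P)²
             + Re tr(H²P⁻¹)/tr(P⁻¹) − (Re tr(HP⁻¹))²/(tr P⁻¹)²`. -/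
theorem hessian_log_kappaF_left (n : ℕ) (A : Matrix (Fin n) (Fin n) ℂ) (hA : IsUnit A)
    (H : Matrix (Fin n) (Fin n) ℂ) (hH : H.IsHermitian) :
    let φ : ℝ → ℝ := fun t =>
      Real.log (frob (mexp ((t : ℂ) • H) * A)) +
      Real.log (frob (A⁻¹ * mexp ((-t : ℂ) • H)))
    let P : Matrix (Fin n) (Fin n) ℂ := A * Aᴴ
    DifferentiableAt ℝ φ 0 ∧ DifferentiableAt ℝ (deriv φ) 0 ∧
      (1 / 2) * deriv (deriv φ) 0 =
        (Matrix.trace (H * H * P)).re / (Matrix.trace P).re -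
          (Matrix.trace (H * P)).re ^ 2 / (Matrix.trace P).re ^ 2 +
        (Matrix.trace (H * H * P⁻¹)).re / (Matrix.trace P⁻¹).re -
          (Matrix.trace (H * P⁻¹)).re ^ 2 / (Matrix.trace P⁻¹).re ^ 2 := by
  intro φ P
  obtain rfl | hn := n.eq_zero_or_pos
  · -- both sides are junk values: `log 0 = 0` and `x / 0 = 0`
    simp [φ, P, frob, trace]
  have : NeZero n := ⟨hn.ne'⟩
  set C : Matrix (Fin n) (Fin n) ℂ := (2 : ℝ) • H
  have hPinv : P⁻¹ = A⁻¹ᴴ * A⁻¹ := inv_mul_conjTranspose_self A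
  have hfpos : ∀ t, 0 < traceExpRe C P t := hH.traceExpRe_two_smul_pos hA
  have hgpos : ∀ t, 0 < traceExpRe (-C) P⁻¹ t :=
    hPinv ▸ hH.traceExpRe_neg_two_smul_pos (isUnit_nonsing_inv_iff.2 hA)
  have hφ : φ = fun t => (Real.log (traceExpRe C P t) + Real.log (traceExpRe (-C) P⁻¹ t)) / 2 := by
    funext t
    simp only [φ, hH.log_frob_mexp_real_smul_mul, hH.log_frob_mul_mexp_neg_smul, hPinv]
    ring
  have hφ' : ∀ t, HasDerivAt φ ((traceExpRe C (C * P) t / traceExpRe C P t +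
      traceExpRe (-C) (-C * P⁻¹) t / traceExpRe (-C) P⁻¹ t) / 2) t := fun t => by
    rw [hφ]
    exact ((hasDerivAt_log_traceExpRe (hfpos t)).add
      (hasDerivAt_log_traceExpRe (hgpos t))).div_const 2
  have hP := (traceExpRe_zero C P ▸ hfpos 0).ne'
  have hQ := (traceExpRe_zero (-C) P⁻¹ ▸ hgpos 0).ne'
  have hφ'' := (((hasDerivAt_logDeriv_traceExpRe_zero C P hP).add
    (hasDerivAt_logDeriv_traceExpRe_zero (-C) P⁻¹ hQ)).div_const 2).congr_of_eventuallyEq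
    (Filter.Eventually.of_forall fun t => (hφ' t).deriv)
  refine ⟨(hφ' 0).differentiableAt, hφ''.differentiableAt, ?_⟩
  rw [hφ''.deriv]
  simp only [C, neg_mul, mul_neg, neg_neg, smul_mul_assoc, mul_smul_comm, smul_smul, trace_neg,
    trace_smul, ← Matrix.mul_assoc, Complex.neg_re, Complex.smul_re, smul_eq_mul]
  field_simp
  ring
end

section
/- Let P be an m×m positive definite Hermitian complex matrix and let H be an m×m Hermitian complex matrix with tr(H) = 0. Then tr(H²P)/tr(P) − (tr(HP))²/(tr P)² ≥ ‖H‖_F² / (tr(P)·tr(P⁻¹)), where all the traces appearing are real numbers (tr(H²P) and tr(HP) are real because H and P are Hermitian), and ‖H‖_F² = tr(H²) is the squared Frobenius norm of H. -/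
/-!
Put `t = tr P`, `c = tr(HP)/t` and `K = H - c·1`. Completing the square gives
`tr(H²P)/t − (tr(HP)/t)² = tr(KPK)/t`, while `tr H = 0` gives `tr(H²) ≤ tr(H²) + c²m = tr(K²)`.
Writing `P = BᴴB` with `B` invertible, `K = B⁻¹(BK)`, and submultiplicativity of the Frobenius
norm yields `tr(K²) ≤ ‖B⁻¹‖² ‖BK‖² = tr(P⁻¹)·tr(KPK)`.
-/

open Matrix
open scoped ComplexOrder

namespace Matrix

section CommRing

variable {R : Type*} [CommRing R] {n : Type*} [Fintype n] [DecidableEq n]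

theorem trace_sub_smul_one_mul_self {H : Matrix n n R} (hH : H.trace = 0) (c : R) :
    trace ((H - c • 1) * (H - c • 1)) = trace (H * H) + c ^ 2 * Fintype.card n := by
  simp only [sub_mul, mul_sub, Matrix.smul_mul, Matrix.mul_smul, Matrix.one_mul, Matrix.mul_one,
    smul_smul, trace_sub, trace_smul, trace_one, hH, smul_eq_mul]
  ring

theorem trace_sub_smul_one_mul_mul_sub_smul_one (H P : Matrix n n R) (c : R) :
    trace ((H - c • 1) * P * (H - c • 1)) =
      trace (H * H * P) - 2 * c * trace (H * P) + c ^ 2 * trace P := by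
  simp only [sub_mul, mul_sub, Matrix.smul_mul, Matrix.mul_smul, Matrix.one_mul, Matrix.mul_one,
    smul_smul, trace_sub, trace_smul, smul_eq_mul, trace_mul_cycle H P H, trace_mul_comm P H]
  ring

end CommRing

section RCLike

variable {𝕜 : Type*} [RCLike 𝕜] {k n : Type*} [Fintype k] [Fintype n]

attribute [local instance] frobeniusNormedAddCommGroup

theorem frobenius_norm_sq_eq_re_trace (A : Matrix n k 𝕜) :
    ‖A‖ ^ 2 = RCLike.re (Aᴴ * A).trace := by
  rw [frobenius_norm_def, ← Real.sqrt_eq_rpow, Real.sq_sqrt (by positivity), Finset.sum_comm]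
  simp only [trace, diag, mul_apply, conjTranspose_apply, RCLike.star_def, RCLike.conj_mul,
    map_sum, Real.rpow_two]
  simp only [← RCLike.ofReal_pow, RCLike.ofReal_re]

open scoped MatrixOrder in
theorem PosDef.re_trace_conjTranspose_mul_self_le [DecidableEq n] {P : Matrix n n 𝕜}
    (hP : P.PosDef) (X : Matrix n k 𝕜) :
    RCLike.re (Xᴴ * X).trace ≤ RCLike.re P⁻¹.trace * RCLike.re (Xᴴ * P * X).trace := by
  obtain ⟨B, hB, rfl⟩ :=
    CStarAlgebra.isStrictlyPositive_iff_eq_star_mul_self.mp hP.isStrictlyPositive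
  rw [star_eq_conjTranspose]
  have hX : X = B⁻¹ * (B * X) := by
    rw [← Matrix.mul_assoc, nonsing_inv_mul _ ((isUnit_iff_isUnit_det B).mp hB), Matrix.one_mul]
  calc RCLike.re (Xᴴ * X).trace = ‖B⁻¹ * (B * X)‖ ^ 2 := by
        rw [← hX, frobenius_norm_sq_eq_re_trace]
    _ ≤ ‖B⁻¹‖ ^ 2 * ‖B * X‖ ^ 2 := by
        rw [← mul_pow]
        gcongr
        exact frobenius_norm_mul _ _
    _ = _ := by
        rw [frobenius_norm_sq_eq_re_trace, frobenius_norm_sq_eq_re_trace, Matrix.mul_inv_rev,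
          ← conjTranspose_nonsing_inv, trace_mul_comm, conjTranspose_mul, Matrix.mul_assoc,
          Matrix.mul_assoc, Matrix.mul_assoc]

end RCLike

end Matrix

/-- For a positive definite Hermitian `P` and a traceless Hermitian `H`,
`tr(H²P)/tr(P) − (tr(HP))²/(tr P)² ≥ tr(H²) / (tr(P)·tr(P⁻¹))`,
where `tr(H²) = ‖H‖_F²` since `H` is Hermitian. -/
theorem trace_quadratic_form_lower_bound (m : ℕ)
    (P H : Matrix (Fin m) (Fin m) ℂ)
    (hP : P.PosDef) (hH : H.IsHermitian) (htr : Matrix.trace H = 0) :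
    (Matrix.trace (H * H)).re /
        ((Matrix.trace P).re * (Matrix.trace P⁻¹).re) ≤
      (Matrix.trace (H * H * P)).re / (Matrix.trace P).re -
        (Matrix.trace (H * P)).re ^ 2 / (Matrix.trace P).re ^ 2 := by
  rcases isEmpty_or_nonempty (Fin m) with _ | _
  · simp [trace]
  set t := (trace P).re
  set s := (trace P⁻¹).re
  set a := (trace (H * P)).re
  have ht : 0 < t := (Complex.pos_iff.mp hP.trace_pos).1
  have hs : 0 < s := (Complex.pos_iff.mp hP.inv.trace_pos).1
  set c : ℝ := a / t
  set K := H - (c : ℂ) • 1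
  have hK : Kᴴ = K := (hH.sub (isHermitian_one.smul (Complex.conj_ofReal _))).eq
  have key : (trace (H * H)).re ≤ s * ((trace (H * H * P)).re - a ^ 2 / t) :=
    calc (trace (H * H)).re ≤ (trace (H * H)).re + c ^ 2 * m :=
          le_add_of_nonneg_right (by positivity)
      _ = (trace (K * K)).re := by
        rw [trace_sub_smul_one_mul_self htr, Complex.add_re, ← Complex.ofReal_pow,
          Complex.re_ofReal_mul, Complex.natCast_re, Fintype.card_fin]
      _ ≤ s * (trace (K * P * K)).re := by
        simpa only [hK, RCLike.re_to_complex] using hP.re_trace_conjTranspose_mul_self_le K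
      _ = s * ((trace (H * H * P)).re - 2 * c * a + c ^ 2 * t) := by
        rw [trace_sub_smul_one_mul_mul_sub_smul_one, ← Complex.ofReal_pow, ← Complex.ofReal_ofNat,
          ← Complex.ofReal_mul, Complex.add_re, Complex.sub_re, Complex.re_ofReal_mul,
          Complex.re_ofReal_mul]
      _ = s * ((trace (H * H * P)).re - a ^ 2 / t) := by
        simp only [c]
        field_simp
        ring
  calc (trace (H * H)).re / (t * s)
      ≤ s * ((trace (H * H * P)).re - a ^ 2 / t) / (t * s) := by gcongr
    _ = _ := by field_simp
end

section
/- (8-smoothness of the log-Frobenius cross condition number.) Let A be a nonzero m×n complex matrix and B a nonzero n×m complex matrix, and let H₁ be an m×m Hermitian matrix and H₂ an n×n Hermitian matrix. Then the function φ(t) = log ‖e^{tH₁} A e^{-tH₂}‖_F + log ‖e^{tH₂} B e^{-tH₁}‖_F is smooth, convex, and satisfies φ''(t) ≤ 8·(‖H₁‖_F² + ‖H₂‖_F²) for every t ∈ ℝ. -/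
open Matrix

section Aux
open NormedSpace
open scoped RealInnerProductSpace

section Abstract
variable {E : Type*} [NormedAddCommGroup E] [InnerProductSpace ℝ E]

theorem log_norm_aux (L : E →L[ℝ] E) (C : ℝ)
    (hsym : ∀ x y : E, ⟪L x, y⟫ = ⟪x, L y⟫)
    (hC : ∀ x : E, ‖L x‖ ≤ C * ‖x‖)
    (X : ℝ → E) (hX : ContDiff ℝ (⊤ : ℕ∞) X) (hX0 : ∀ t, X t ≠ 0)
    (hD : ∀ t, HasDerivAt X (L (X t)) t) :
    ContDiff ℝ (⊤ : ℕ∞) (fun t => Real.log ‖X t‖) ∧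
    ConvexOn ℝ Set.univ (fun t => Real.log ‖X t‖) ∧
    ∀ t, deriv (deriv (fun t => Real.log ‖X t‖)) t ≤ 2 * C ^ 2 := by
  set f : ℝ → ℝ := fun t => ⟪X t, X t⟫ with hfdef
  set g : ℝ → ℝ := fun t => ⟪X t, L (X t)⟫ with hgdef
  have hfn : ∀ t, f t = ‖X t‖ ^ 2 := fun t => real_inner_self_eq_norm_sq (X t)
  have fpos : ∀ t, 0 < f t := fun t => by
    rw [hfn t]; exact pow_pos (norm_pos_iff.2 (hX0 t)) 2
  have hLX : ∀ t, HasDerivAt (fun s => L (X s)) (L (L (X t))) t := fun t =>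
    (L.hasFDerivAt).comp_hasDerivAt t (hD t)
  have hfD : ∀ t, HasDerivAt f (2 * g t) t := by
    intro t
    have := (hD t).inner ℝ (hD t)
    refine this.congr_deriv ?_
    show _ = 2 * ⟪X t, L (X t)⟫
    rw [real_inner_comm (L (X t)) (X t)]; ring
  have hgD : ∀ t, HasDerivAt g (2 * ‖L (X t)‖ ^ 2) t := by
    intro t
    have := (hD t).inner ℝ (hLX t)
    refine this.congr_deriv ?_
    rw [← hsym (X t) (L (X t)), real_inner_self_eq_norm_sq]
    ring
  have hXc : ContDiff ℝ (⊤ : ℕ∞) fun t => L (X t) := L.contDiff.comp hX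
  have hfc : ContDiff ℝ (⊤ : ℕ∞) f := hX.inner ℝ hX
  have hgc : ContDiff ℝ (⊤ : ℕ∞) g := hX.inner ℝ hXc
  have hψeq : (fun t => Real.log ‖X t‖) = fun t => Real.log (f t) / 2 := by
    funext t
    have : f t = ‖X t‖ * ‖X t‖ := real_inner_self_eq_norm_mul_norm (X t)
    rw [this, Real.log_mul (norm_ne_zero_iff.2 (hX0 t)) (norm_ne_zero_iff.2 (hX0 t))]
    ring
  have hψc : ContDiff ℝ (⊤ : ℕ∞) (fun t => Real.log ‖X t‖) := by
    rw [hψeq]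
    exact (hfc.log fun t => (fpos t).ne').div_const 2
  have hψD : ∀ t, HasDerivAt (fun t => Real.log ‖X t‖) (g t / f t) t := by
    intro t
    rw [hψeq]
    have := ((hfD t).log (fpos t).ne').div_const 2
    refine this.congr_deriv ?_
    field_simp
  have hderiv1 : deriv (fun t => Real.log ‖X t‖) = fun t => g t / f t := by
    funext t; exact (hψD t).deriv
  have hψD2 : ∀ t, HasDerivAt (fun t => g t / f t)
      ((2 * ‖L (X t)‖ ^ 2 * f t - g t * (2 * g t)) / f t ^ 2) t := fun t =>
    (hgD t).div (hfD t) (fpos t).ne'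
  have hderiv2 : ∀ t, deriv (deriv (fun t => Real.log ‖X t‖)) t =
      (2 * ‖L (X t)‖ ^ 2 * f t - g t * (2 * g t)) / f t ^ 2 := by
    intro t; rw [hderiv1]; exact (hψD2 t).deriv
  have hCS : ∀ t, g t * g t ≤ f t * ‖L (X t)‖ ^ 2 := by
    intro t
    have := real_inner_mul_inner_self_le (X t) (L (X t))
    rwa [real_inner_self_eq_norm_sq (L (X t))] at this
  have hsecond_nonneg : ∀ t, 0 ≤ deriv (deriv (fun t => Real.log ‖X t‖)) t := by
    intro t
    rw [hderiv2 t]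
    apply div_nonneg _ (sq_nonneg _)
    nlinarith [hCS t]
  refine ⟨hψc, ?_, ?_⟩
  · apply convexOn_of_deriv2_nonneg convex_univ
    · exact hψc.continuous.continuousOn
    · exact (hψc.differentiable (by simp)).differentiableOn
    · rw [hderiv1]
      exact (Differentiable.differentiableOn (fun t => (hψD2 t).differentiableAt))
    · intro t _
      simpa [Function.iterate_succ, Function.comp] using hsecond_nonneg t
  · intro t
    rw [hderiv2 t]
    have hC0 : 0 ≤ C := by
      have h1 := hC (X t)
      have h2 : (0:ℝ) < ‖X t‖ := norm_pos_iff.2 (hX0 t)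
      nlinarith [norm_nonneg (L (X t))]
    have hLb : ‖L (X t)‖ ^ 2 ≤ C ^ 2 * f t := by
      have := hC (X t)
      have h2 := hfn t
      nlinarith [norm_nonneg (L (X t)), norm_nonneg (X t)]
    rw [div_le_iff₀ (pow_pos (fpos t) 2)]
    nlinarith [hCS t, fpos t, sq_nonneg (g t)]

end Abstract

attribute [local instance] Matrix.frobeniusSeminormedAddCommGroup
  Matrix.frobeniusNormedAddCommGroup Matrix.frobeniusNormedSpace
  Matrix.frobeniusNormedRing Matrix.frobeniusNormedAlgebra Matrix.frobeniusIsBoundedSMul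

-- 3. mexp agrees with real exp
example {k : ℕ} (H : Matrix (Fin k) (Fin k) ℂ) (t : ℝ) :
    mexp ((t : ℂ) • H) = NormedSpace.exp (t • H) := by
  rw [mexp, Complex.coe_smul]

-- 4. derivative of exp
example {k : ℕ} (H : Matrix (Fin k) (Fin k) ℂ) (t : ℝ) :
    HasDerivAt (fun u : ℝ => NormedSpace.exp (u • H)) (H * NormedSpace.exp (t • H)) t :=
  hasDerivAt_exp_smul_const' H t

-- analyticity of exp composed
example {k : ℕ} (H : Matrix (Fin k) (Fin k) ℂ) :
    ContDiff ℝ (⊤ : ℕ∞) (fun u : ℝ => NormedSpace.exp (u • H)) := by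
  have h1 : ContDiff ℝ (⊤ : ℕ∞) (NormedSpace.exp : Matrix (Fin k) (Fin k) ℂ → _) :=
    AnalyticOnNhd.contDiff (fun x _ => NormedSpace.exp_analytic x)
  exact h1.comp (contDiff_id.smul contDiff_const)

-- 1. frob = frobenius norm
theorem frob_eq_norm {m n : ℕ} (M : Matrix (Fin m) (Fin n) ℂ) : frob M = ‖M‖ := by
  rw [frob, Matrix.frobenius_norm_def]
  rw [Real.sqrt_eq_rpow]
  congr 1
  rw [Matrix.trace]
  simp only [Matrix.diag_apply, Matrix.mul_apply, Matrix.conjTranspose_apply]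
  rw [Complex.re_sum]
  rw [Finset.sum_comm]
  congr 1; funext i
  rw [Complex.re_sum]
  congr 1; funext j
  rw [show star (M j i) = (starRingEnd ℂ) (M j i) from rfl, ← Complex.normSq_eq_conj_mul_self]
  rw [Complex.ofReal_re, Complex.normSq_eq_norm_sq,
    ← Real.rpow_natCast (‖M j i‖) 2]
  norm_num

theorem isBBM_matmul {p q r : ℕ} :
    IsBoundedBilinearMap ℝ (fun z : Matrix (Fin p) (Fin q) ℂ × Matrix (Fin q) (Fin r) ℂ =>
      z.1 * z.2) where
  add_left := fun x₁ x₂ y => Matrix.add_mul x₁ x₂ y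
  smul_left := fun c x y => Matrix.smul_mul c x y
  add_right := fun x y₁ y₂ => Matrix.mul_add x y₁ y₂
  smul_right := fun c x y => Matrix.mul_smul x c y
  bound := ⟨1, one_pos, fun x y => by
    simpa using Matrix.frobenius_norm_mul x y⟩

theorem HasDerivAt.matmul {p q r : ℕ} {P : ℝ → Matrix (Fin p) (Fin q) ℂ}
    {Q : ℝ → Matrix (Fin q) (Fin r) ℂ} {P' Q'} {t : ℝ}
    (hP : HasDerivAt P P' t) (hQ : HasDerivAt Q Q' t) :
    HasDerivAt (fun s => P s * Q s) (P' * Q t + P t * Q') t := by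
  have h := (isBBM_matmul.hasFDerivAt (P t, Q t)).comp_hasDerivAt t (hP.prodMk hQ)
  refine h.congr_deriv ?_
  rw [isBBM_matmul.deriv_apply]
  simp [add_comm]

theorem contDiff_matmul {p q r : ℕ} {P : ℝ → Matrix (Fin p) (Fin q) ℂ}
    {Q : ℝ → Matrix (Fin q) (Fin r) ℂ}
    (hP : ContDiff ℝ (⊤ : ℕ∞) P) (hQ : ContDiff ℝ (⊤ : ℕ∞) Q) :
    ContDiff ℝ (⊤ : ℕ∞) (fun s => P s * Q s) :=
  isBBM_matmul.contDiff.comp (hP.prodMk hQ)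

noncomputable def toE {m n : ℕ} :
    Matrix (Fin m) (Fin n) ℂ ≃ₗᵢ[ℝ] EuclideanSpace ℂ (Fin m × Fin n) where
  toLinearEquiv :=
  { toFun := fun M => (WithLp.equiv 2 (Fin m × Fin n → ℂ)).symm (fun p => M p.1 p.2)
    map_add' := fun M N => rfl
    map_smul' := fun c M => rfl
    invFun := fun x => Matrix.of fun i j => x (i, j)
    left_inv := fun M => rfl
    right_inv := fun x => rfl }
  norm_map' := fun M => by
    rw [EuclideanSpace.norm_eq, Matrix.frobenius_norm_def, Real.sqrt_eq_rpow]
    congr 1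
    rw [Fintype.sum_prod_type]
    congr 1; funext i; congr 1; funext j
    show ‖M i j‖ ^ (2:ℕ) = ‖M i j‖ ^ (2:ℝ)
    rw [← Real.rpow_natCast (‖M i j‖) 2]
    norm_num

theorem inner_toE {m n : ℕ} (M N : Matrix (Fin m) (Fin n) ℂ) :
    (inner ℂ (toE M) (toE N) : ℂ) = Matrix.trace (Mᴴ * N) := by
  rw [PiLp.inner_apply, Matrix.trace]
  simp only [Matrix.diag_apply, Matrix.mul_apply, Matrix.conjTranspose_apply,
    RCLike.inner_apply]
  rw [Fintype.sum_prod_type, Finset.sum_comm]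
  exact Finset.sum_congr rfl fun i _ => Finset.sum_congr rfl fun j _ => mul_comm _ _

theorem trace_sym {m n : ℕ} {H₁ : Matrix (Fin m) (Fin m) ℂ} {H₂ : Matrix (Fin n) (Fin n) ℂ}
    (hH₁ : H₁.IsHermitian) (hH₂ : H₂.IsHermitian) (M N : Matrix (Fin m) (Fin n) ℂ) :
    Matrix.trace ((H₁ * M - M * H₂)ᴴ * N) = Matrix.trace (Mᴴ * (H₁ * N - N * H₂)) := by
  rw [Matrix.conjTranspose_sub, Matrix.conjTranspose_mul, Matrix.conjTranspose_mul,
    hH₁.eq, hH₂.eq, Matrix.sub_mul, Matrix.mul_sub, Matrix.trace_sub, Matrix.trace_sub]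
  congr 1
  · rw [Matrix.mul_assoc]
  · rw [Matrix.trace_mul_cycle H₂ Mᴴ N, Matrix.trace_mul_comm (N * H₂) Mᴴ]

theorem X_ne_zero {m n : ℕ} (H₁ : Matrix (Fin m) (Fin m) ℂ) (H₂ : Matrix (Fin n) (Fin n) ℂ)
    {A : Matrix (Fin m) (Fin n) ℂ} (hA : A ≠ 0) (t : ℝ) :
    NormedSpace.exp (t • H₁) * A * NormedSpace.exp (t • H₂) ≠ 0 := by
  intro h
  apply hA
  obtain ⟨U, hU⟩ := NormedSpace.isUnit_exp (t • H₁)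
  obtain ⟨V, hV⟩ := NormedSpace.isUnit_exp (t • H₂)
  have : (↑U⁻¹ : Matrix (Fin m) (Fin m) ℂ) * (NormedSpace.exp (t • H₁) * A *
      NormedSpace.exp (t • H₂)) * (↑V⁻¹ : Matrix (Fin n) (Fin n) ℂ) = A := by
    rw [show NormedSpace.exp (t • H₁) = (U : Matrix (Fin m) (Fin m) ℂ) from hU.symm,
      show NormedSpace.exp (t • H₂) = (V : Matrix (Fin n) (Fin n) ℂ) from hV.symm]
    rw [← Matrix.mul_assoc, ← Matrix.mul_assoc, Units.inv_mul, Matrix.one_mul,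
      Matrix.mul_assoc, Units.mul_inv, Matrix.mul_one]
  rw [← this, h, Matrix.mul_zero, Matrix.zero_mul]

theorem hasDerivAt_matX {m n : ℕ} (H₁ : Matrix (Fin m) (Fin m) ℂ) (H₂ : Matrix (Fin n) (Fin n) ℂ)
    (A : Matrix (Fin m) (Fin n) ℂ) (t : ℝ) :
    HasDerivAt (fun s : ℝ => NormedSpace.exp (s • H₁) * A * NormedSpace.exp (s • (-H₂)))
      (H₁ * (NormedSpace.exp (t • H₁) * A * NormedSpace.exp (t • (-H₂))) -
        (NormedSpace.exp (t • H₁) * A * NormedSpace.exp (t • (-H₂))) * H₂) t := by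
  have hP : HasDerivAt (fun s : ℝ => NormedSpace.exp (s • H₁))
      (H₁ * NormedSpace.exp (t • H₁)) t := hasDerivAt_exp_smul_const' H₁ t
  have hQ : HasDerivAt (fun s : ℝ => NormedSpace.exp (s • (-H₂)))
      (NormedSpace.exp (t • (-H₂)) * (-H₂)) t := hasDerivAt_exp_smul_const (-H₂) t
  have h1 := (hP.matmul (hasDerivAt_const t A)).matmul hQ
  convert h1 using 1
  simp [Matrix.mul_zero, Matrix.zero_mul, Matrix.mul_neg, Matrix.neg_mul, Matrix.mul_assoc,
    sub_eq_add_neg]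

theorem contDiff_matX {m n : ℕ} (H₁ : Matrix (Fin m) (Fin m) ℂ) (H₂ : Matrix (Fin n) (Fin n) ℂ)
    (A : Matrix (Fin m) (Fin n) ℂ) :
    ContDiff ℝ (⊤ : ℕ∞) (fun s : ℝ =>
      NormedSpace.exp (s • H₁) * A * NormedSpace.exp (s • (-H₂))) := by
  have hexp : ∀ k : ℕ, ∀ H : Matrix (Fin k) (Fin k) ℂ,
      ContDiff ℝ (⊤ : ℕ∞) (fun u : ℝ => NormedSpace.exp (u • H)) := by
    intro k H
    have h1 : ContDiff ℝ (⊤ : ℕ∞) (NormedSpace.exp : Matrix (Fin k) (Fin k) ℂ → _) :=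
      AnalyticOnNhd.contDiff (fun x _ => NormedSpace.exp_analytic x)
    exact h1.comp (contDiff_id.smul contDiff_const)
  exact contDiff_matmul (contDiff_matmul (hexp m H₁) contDiff_const) (hexp n (-H₂))

theorem mexp_smul_real {k : ℕ} (H : Matrix (Fin k) (Fin k) ℂ) (t : ℝ) :
    mexp ((t : ℂ) • H) = NormedSpace.exp (t • H) := by
  rw [mexp, Complex.coe_smul]

theorem mexp_neg_smul_real {k : ℕ} (H : Matrix (Fin k) (Fin k) ℂ) (t : ℝ) :
    mexp ((-t : ℂ) • H) = NormedSpace.exp (t • (-H)) := by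
  rw [mexp]
  congr 1
  rw [smul_neg, ← neg_smul, ← Complex.coe_smul]
  norm_num

theorem cross_term {m n : ℕ} (H₁ : Matrix (Fin m) (Fin m) ℂ) (H₂ : Matrix (Fin n) (Fin n) ℂ)
    (hH₁ : H₁.IsHermitian) (hH₂ : H₂.IsHermitian)
    (A : Matrix (Fin m) (Fin n) ℂ) (hA : A ≠ 0) :
    ContDiff ℝ (⊤ : ℕ∞) (fun t : ℝ => Real.log (frob (mexp ((t : ℂ) • H₁) * A * mexp ((-t : ℂ) • H₂)))) ∧
    ConvexOn ℝ Set.univ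
      (fun t : ℝ => Real.log (frob (mexp ((t : ℂ) • H₁) * A * mexp ((-t : ℂ) • H₂)))) ∧
    ∀ t : ℝ, deriv (deriv
      (fun t : ℝ => Real.log (frob (mexp ((t : ℂ) • H₁) * A * mexp ((-t : ℂ) • H₂))))) t ≤
      2 * (frob H₁ + frob H₂) ^ 2 := by
  letI : InnerProductSpace ℝ (EuclideanSpace ℂ (Fin m × Fin n)) :=
    InnerProductSpace.complexToReal
  set M : ℝ → Matrix (Fin m) (Fin n) ℂ :=
    fun t => NormedSpace.exp (t • H₁) * A * NormedSpace.exp (t • (-H₂)) with hMdef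
  set X : ℝ → EuclideanSpace ℂ (Fin m × Fin n) := fun t => toE (M t) with hXdef
  have hψ : (fun t : ℝ => Real.log (frob (mexp ((t : ℂ) • H₁) * A * mexp ((-t : ℂ) • H₂)))) =
      fun t => Real.log ‖X t‖ := by
    funext t
    rw [mexp_smul_real, mexp_neg_smul_real, hXdef]
    rw [frob_eq_norm, toE.norm_map]
  -- the operator
  let matL : Matrix (Fin m) (Fin n) ℂ →ₗ[ℝ] Matrix (Fin m) (Fin n) ℂ :=
    { toFun := fun N => H₁ * N - N * H₂
      map_add' := fun N N' => by
        rw [Matrix.mul_add, Matrix.add_mul]; abel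
      map_smul' := fun c N => by
        simp [Matrix.mul_smul, Matrix.smul_mul, smul_sub] }
  let L : EuclideanSpace ℂ (Fin m × Fin n) →L[ℝ] EuclideanSpace ℂ (Fin m × Fin n) :=
    LinearMap.toContinuousLinearMap
      (toE.toLinearEquiv.toLinearMap.comp (matL.comp toE.symm.toLinearEquiv.toLinearMap))
  have hLapp : ∀ N : Matrix (Fin m) (Fin n) ℂ, L (toE N) = toE (H₁ * N - N * H₂) := by
    intro N
    show toE (matL (toE.symm (toE N))) = toE (H₁ * N - N * H₂)
    rw [toE.symm_apply_apply]
    rfl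
  have hsym : ∀ x y : EuclideanSpace ℂ (Fin m × Fin n),
      (inner ℝ (L x) y : ℝ) = inner ℝ x (L y) := by
    intro x y
    obtain ⟨P, rfl⟩ := toE.surjective x
    obtain ⟨Q, rfl⟩ := toE.surjective y
    rw [hLapp, hLapp]
    show Complex.re (inner ℂ (toE (H₁ * P - P * H₂)) (toE Q) : ℂ) =
      Complex.re (inner ℂ (toE P) (toE (H₁ * Q - Q * H₂)) : ℂ)
    rw [inner_toE, inner_toE, trace_sym hH₁ hH₂]
  have hC : ∀ x : EuclideanSpace ℂ (Fin m × Fin n), ‖L x‖ ≤ (‖H₁‖ + ‖H₂‖) * ‖x‖ := by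
    intro x
    obtain ⟨P, rfl⟩ := toE.surjective x
    rw [hLapp, toE.norm_map, toE.norm_map]
    calc ‖H₁ * P - P * H₂‖ ≤ ‖H₁ * P‖ + ‖P * H₂‖ := norm_sub_le _ _
      _ ≤ ‖H₁‖ * ‖P‖ + ‖P‖ * ‖H₂‖ :=
        add_le_add (Matrix.frobenius_norm_mul _ _) (Matrix.frobenius_norm_mul _ _)
      _ = (‖H₁‖ + ‖H₂‖) * ‖P‖ := by ring
  have hX0 : ∀ t, X t ≠ 0 := by
    intro t h
    exact X_ne_zero H₁ (-H₂) hA t (toE.map_eq_zero_iff.mp h)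
  have hXc : ContDiff ℝ (⊤ : ℕ∞) X :=
    toE.toLinearIsometry.toContinuousLinearMap.contDiff.comp (contDiff_matX H₁ H₂ A)
  have hD : ∀ t, HasDerivAt X (L (X t)) t := by
    intro t
    have h := hasDerivAt_matX H₁ H₂ A t
    have h2 := (toE.toLinearIsometry.toContinuousLinearMap.hasFDerivAt).comp_hasDerivAt t h
    rw [hXdef]
    refine h2.congr_deriv ?_
    exact (hLapp (M t)).symm
  have main := log_norm_aux L (‖H₁‖ + ‖H₂‖) hsym hC X hXc hX0 hD
  rw [hψ, frob_eq_norm H₁, frob_eq_norm H₂]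
  exact main

end Aux

section Main
open NormedSpace
attribute [local instance] Matrix.frobeniusSeminormedAddCommGroup
  Matrix.frobeniusNormedAddCommGroup Matrix.frobeniusNormedSpace
  Matrix.frobeniusNormedRing Matrix.frobeniusNormedAlgebra Matrix.frobeniusIsBoundedSMul

/-- **8-smoothness of the log-Frobenius cross condition number.**
For nonzero `A ∈ ℂ^{m×n}`, `B ∈ ℂ^{n×m}` and Hermitian `H₁, H₂`, the function
`φ(t) = log ‖e^{tH₁} A e^{-tH₂}‖_F + log ‖e^{tH₂} B e^{-tH₁}‖_F` is smooth, convex,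
and satisfies `φ''(t) ≤ 8(‖H₁‖_F² + ‖H₂‖_F²)` for all `t`. -/
theorem log_cross_condition_smoothness (m n : ℕ)
    (A : Matrix (Fin m) (Fin n) ℂ) (B : Matrix (Fin n) (Fin m) ℂ)
    (hA : A ≠ 0) (hB : B ≠ 0)
    (H₁ : Matrix (Fin m) (Fin m) ℂ) (H₂ : Matrix (Fin n) (Fin n) ℂ)
    (hH₁ : H₁.IsHermitian) (hH₂ : H₂.IsHermitian) :
    let φ : ℝ → ℝ := fun t =>
      Real.log (frob (mexp ((t : ℂ) • H₁) * A * mexp ((-t : ℂ) • H₂))) +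
      Real.log (frob (mexp ((t : ℂ) • H₂) * B * mexp ((-t : ℂ) • H₁)))
    ContDiff ℝ (⊤ : ℕ∞) φ ∧ ConvexOn ℝ Set.univ φ ∧
      ∀ t : ℝ, deriv (deriv φ) t ≤ 8 * (frob H₁ ^ 2 + frob H₂ ^ 2) := by
  intro φ
  obtain ⟨c1, v1, b1⟩ := cross_term H₁ H₂ hH₁ hH₂ A hA
  obtain ⟨c2, v2, b2⟩ := cross_term H₂ H₁ hH₂ hH₁ B hB
  set ψ₁ : ℝ → ℝ :=
    fun t => Real.log (frob (mexp ((t : ℂ) • H₁) * A * mexp ((-t : ℂ) • H₂))) with hψ₁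
  set ψ₂ : ℝ → ℝ :=
    fun t => Real.log (frob (mexp ((t : ℂ) • H₂) * B * mexp ((-t : ℂ) • H₁))) with hψ₂
  have hφ : φ = fun t => ψ₁ t + ψ₂ t := rfl
  have d1 : Differentiable ℝ ψ₁ := c1.differentiable (by simp)
  have d2 : Differentiable ℝ ψ₂ := c2.differentiable (by simp)
  have hsucc : (((⊤ : ℕ∞) : WithTop ℕ∞) + 1) = ((⊤ : ℕ∞) : WithTop ℕ∞) := by
    rw [← WithTop.coe_one, ← WithTop.coe_add, top_add]
  have dd1 : Differentiable ℝ (deriv ψ₁) := by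
    have := (contDiff_succ_iff_deriv.mp (hsucc ▸ c1)).2.2
    exact this.differentiable (by simp)
  have dd2 : Differentiable ℝ (deriv ψ₂) := by
    have := (contDiff_succ_iff_deriv.mp (hsucc ▸ c2)).2.2
    exact this.differentiable (by simp)
  refine ⟨hφ ▸ c1.add c2, hφ ▸ v1.add v2, ?_⟩
  intro t
  have hdφ : deriv φ = fun s => deriv ψ₁ s + deriv ψ₂ s := by
    rw [hφ]; funext s; exact deriv_add (d1 s) (d2 s)
  rw [hdφ]
  have h2 : deriv (fun s => deriv ψ₁ s + deriv ψ₂ s) t = deriv (deriv ψ₁) t + deriv (deriv ψ₂) t :=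
    deriv_add (dd1 t) (dd2 t)
  rw [h2]
  have h01 : 0 ≤ frob H₁ := Real.sqrt_nonneg _
  have h02 : 0 ≤ frob H₂ := Real.sqrt_nonneg _
  nlinarith [b1 t, b2 t, sq_nonneg (frob H₁ - frob H₂)]

end Main
end

section
/- (Geodesic convexity of the local condition number under the shuffling action.) Let V be a complex inner product space, let f = (f₁,…,f_m) be an m-tuple of vectors of V not all zero, let J be a nonzero n×m complex matrix, and let ‖·‖₂ be a unitarily invariant norm on complex n×m matrices. For an m×m complex matrix X define the shuffled tuple X·f by (X·f)ᵢ = Σⱼ Xᵢⱼ fⱼ, and set ‖f‖ := √(Σᵢ ‖fᵢ‖²). Then for every Hermitian m×m matrix H, the function t ↦ log ‖e^{tH}·f‖ + log ‖J e^{-tH}‖₂ is convex on ℝ. -/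
/-!
Diagonalize `H = U diag(λ) U*` and put `g = U*·f`. Both `f ↦ √(Σ‖fᵢ‖²)` and `N₂` are unitarily
invariant, so the two terms become `log p₁(e^{tλ})` and `log p₂(e^{-tλ})` for the seminorms
`p₁ r = √(Σ‖rᵢ gᵢ‖²)` and `p₂ r = N₂(J U diag r)` on `ℝ^m`. Both are absolute (they depend only on
`|rᵢ|`, since sign changes are unitary diagonal matrices), and an absolute seminorm is monotone in
`|r|`: test `r` against a Hahn–Banach norming functional, and re-sign `s` to match its coefficients.
For such `p`, `t ↦ log p(e^{tμ})` is convex: writing `Lₓ = log p(e^{xμ})`, convexity of `exp`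
bounds `e^{(ax+by)μᵢ}` coordinatewise by `e^{a Lₓ + b L_y}` times the convex combination
`a e^{xμᵢ - Lₓ} + b e^{yμᵢ - L_y}`, whose image under `p` is at most `a + b = 1`.
-/

open Matrix

/-- The shuffling action of an `m × m` complex matrix on an `m`-tuple of vectors:
`(X·f)ᵢ = Σⱼ Xᵢⱼ fⱼ`. -/
noncomputable def shuffle {V : Type*} [AddCommGroup V] [Module ℂ V] {m : ℕ}
    (X : Matrix (Fin m) (Fin m) ℂ) (f : Fin m → V) : Fin m → V :=
  fun i => ∑ j, X i j • f j

namespace Seminorm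

theorem exists_linearMap_eq_and_le {E : Type*} [AddCommGroup E] [Module ℝ E]
    (p : Seminorm ℝ E) (x : E) : ∃ g : E →ₗ[ℝ] ℝ, g x = p x ∧ ∀ y, g y ≤ p y := by
  have hker : ∀ c : ℝ, c • x = 0 → c • p x = 0 := fun c hc => by
    have hpc := congrArg p hc
    rw [map_smul_eq_mul, map_zero, Real.norm_eq_abs] at hpc
    rw [smul_eq_mul, ← abs_eq_zero, abs_mul, abs_of_nonneg (apply_nonneg p x), hpc]
  set f : E →ₗ.[ℝ] ℝ := LinearPMap.mkSpanSingleton' x (p x) hker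
  have hfp : ∀ y : f.domain, f y ≤ p y := by
    rintro ⟨y, hy⟩
    obtain ⟨c, rfl⟩ := Submodule.mem_span_singleton.mp hy
    rw [LinearPMap.mkSpanSingleton'_apply, map_smul_eq_mul, smul_eq_mul, Real.norm_eq_abs]
    exact mul_le_mul_of_nonneg_right (le_abs_self c) (apply_nonneg p x)
  obtain ⟨g, hgx, hgp⟩ := exists_extension_of_le_sublinear f p
    (fun c hc y => by rw [map_smul_eq_mul, Real.norm_of_nonneg hc.le]) (map_add_le_add p) hfp
  exact ⟨g, (hgx ⟨x, Submodule.mem_span_singleton_self x⟩).trans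
    (LinearPMap.mkSpanSingleton'_apply_self _ _ _ _), hgp⟩

variable {ι : Type*} [Fintype ι]

def IsAbsolute (p : Seminorm ℝ (ι → ℝ)) : Prop :=
  ∀ r s : ι → ℝ, (∀ i, |r i| = |s i|) → p r = p s

theorem IsAbsolute.le_of_abs_le {p : Seminorm ℝ (ι → ℝ)} (hp : p.IsAbsolute) {r s : ι → ℝ}
    (hrs : ∀ i, |r i| ≤ |s i|) : p r ≤ p s := by
  classical
  obtain ⟨g, hgr, hgp⟩ := p.exists_linearMap_eq_and_le r
  set c : ι → ℝ := fun i => g fun j => if i = j then 1 else 0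
  have hg : ∀ v, g v = ∑ i, v i * c i := fun v => LinearMap.pi_apply_eq_sum_univ g v
  let s' : ι → ℝ := fun i => if 0 ≤ c i then |s i| else -|s i|
  have hs' : ∀ i, s' i * c i = |s i| * |c i| := fun i => by
    by_cases h : 0 ≤ c i
    · simp [s', h, abs_of_nonneg h]
    · simp [s', h, abs_of_neg (not_le.mp h)]
  calc p r = ∑ i, r i * c i := by rw [← hgr, hg]
    _ ≤ ∑ i, |s i| * |c i| := Finset.sum_le_sum fun i _ => (le_abs_self _).trans <| by
        rw [abs_mul]; exact mul_le_mul_of_nonneg_right (hrs i) (abs_nonneg _)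
    _ = g s' := by simp only [hg, hs']
    _ ≤ p s' := hgp s'
    _ = p s := hp _ _ fun i => by by_cases h : 0 ≤ c i <;> simp [s', h]

theorem IsAbsolute.convexOn_log_exp {p : Seminorm ℝ (ι → ℝ)} (hp : p.IsAbsolute) (μ : ι → ℝ)
    (hpos : ∀ t, 0 < p fun i => Real.exp (t * μ i)) :
    ConvexOn ℝ Set.univ fun t => Real.log (p fun i => Real.exp (t * μ i)) := by
  refine ⟨convex_univ, fun x _ y _ a b ha hb hab => ?_⟩
  set L : ℝ → ℝ := fun t => Real.log (p fun i => Real.exp (t * μ i))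
  have hexpL : ∀ t, Real.exp (L t) = p fun i => Real.exp (t * μ i) :=
    fun t => Real.exp_log (hpos t)
  set K := a * L x + b * L y
  set w : ι → ℝ := (a * Real.exp (-L x)) • (fun i => Real.exp (x * μ i)) +
    (b * Real.exp (-L y)) • fun i => Real.exp (y * μ i)
  have hcoord : ∀ i, |Real.exp ((a • x + b • y) * μ i)| ≤ |(Real.exp K • w) i| := fun i => by
    have hconv := convexOn_exp.2 (Set.mem_univ (-L x + x * μ i)) (Set.mem_univ (-L y + y * μ i))
      ha hb hab
    simp only [smul_eq_mul] at hconv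
    rw [abs_of_pos (Real.exp_pos _), abs_of_nonneg
      (by simp only [w, Pi.add_apply, Pi.smul_apply, smul_eq_mul]; positivity)]
    calc Real.exp ((a • x + b • y) * μ i)
        = Real.exp K * Real.exp (a * (-L x + x * μ i) + b * (-L y + y * μ i)) := by
          rw [← Real.exp_add]; congr 1; simp only [smul_eq_mul, K]; ring
      _ ≤ Real.exp K * (a * (Real.exp (-L x) * Real.exp (x * μ i)) +
            b * (Real.exp (-L y) * Real.exp (y * μ i))) := by
          gcongr
          rwa [← Real.exp_add, ← Real.exp_add]
      _ = (Real.exp K • w) i := by simp only [w, Pi.add_apply, Pi.smul_apply, smul_eq_mul]; ring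
  have hw : p w ≤ 1 := by
    calc p w ≤ a * Real.exp (-L x) * Real.exp (L x) + b * Real.exp (-L y) * Real.exp (L y) := by
          refine (map_add_le_add p _ _).trans_eq ?_
          rw [map_smul_eq_mul, map_smul_eq_mul, hexpL, hexpL, Real.norm_of_nonneg (by positivity),
            Real.norm_of_nonneg (by positivity)]
      _ = 1 := by simp only [mul_assoc, ← Real.exp_add, neg_add_cancel, Real.exp_zero]; linarith
  rw [Real.log_le_iff_le_exp (hpos _)]
  calc p (fun i => Real.exp ((a • x + b • y) * μ i)) ≤ p (Real.exp K • w) := hp.le_of_abs_le hcoord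
    _ = Real.exp K * p w := by rw [map_smul_eq_mul, Real.norm_of_nonneg (Real.exp_pos _).le]
    _ ≤ Real.exp K := mul_le_of_le_one_right (Real.exp_pos _).le hw

end Seminorm

section Shuffle

variable {V : Type*} {m : ℕ}

section Module

variable [AddCommGroup V] [Module ℂ V]

theorem shuffle_mul (X Y : Matrix (Fin m) (Fin m) ℂ) (f : Fin m → V) :
    shuffle (X * Y) f = shuffle X (shuffle Y f) := by
  funext i
  simp only [shuffle, mul_apply, Finset.smul_sum, Finset.sum_smul, smul_smul]
  exact Finset.sum_comm

theorem shuffle_diagonal (d : Fin m → ℂ) (f : Fin m → V) (i : Fin m) :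
    shuffle (diagonal d) f i = d i • f i := by
  simp [shuffle, diagonal_apply]

theorem shuffle_one (f : Fin m → V) : shuffle 1 f = f := by
  funext i
  simpa using shuffle_diagonal (fun _ => (1 : ℂ)) f i

end Module

theorem sum_norm_sq_shuffle_of_mem_unitaryGroup [NormedAddCommGroup V] [InnerProductSpace ℂ V]
    {W : Matrix (Fin m) (Fin m) ℂ}
    (hW : W ∈ unitaryGroup (Fin m) ℂ) (f : Fin m → V) :
    ∑ i, ‖shuffle W f i‖ ^ 2 = ∑ i, ‖f i‖ ^ 2 := by
  have hinner : ∑ i, inner ℂ (shuffle W f i) (shuffle W f i) = ∑ j, inner ℂ (f j) (f j) :=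
    calc ∑ i, inner ℂ (shuffle W f i) (shuffle W f i)
        = ∑ j, ∑ l, (star W * W) l j * inner ℂ (f l) (f j) := by
          simp only [shuffle, inner_sum, sum_inner, inner_smul_left, inner_smul_right, mul_apply,
            star_apply, RCLike.star_def, Finset.sum_mul, Finset.mul_sum]
          rw [Finset.sum_comm]
          refine Finset.sum_congr rfl fun j _ => ?_
          rw [Finset.sum_comm]
          exact Finset.sum_congr rfl fun l _ => Finset.sum_congr rfl fun i _ => by ring
      _ = ∑ j, inner ℂ (f j) (f j) := by
          simp [mem_unitaryGroup_iff'.mp hW, one_apply]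
  have hre := congrArg Complex.re hinner
  simpa [Complex.re_sum, ← Complex.ofReal_pow] using hre

end Shuffle

theorem diagonal_mem_unitaryGroup_of_abs_eq_one {ι : Type*} [Fintype ι] [DecidableEq ι]
    {ε : ι → ℝ} (hε : ∀ i, |ε i| = 1) : diagonal (fun i => (ε i : ℂ)) ∈ unitaryGroup ι ℂ := by
  rw [mem_unitaryGroup_iff', star_eq_conjTranspose, diagonal_conjTranspose, diagonal_mul_diagonal,
    ← diagonal_one]
  congr 1
  funext i
  have hsq : ε i * ε i = 1 := by rw [← abs_mul_abs_self, hε i, one_mul]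
  simp [← Complex.ofReal_mul, hsq]

theorem mexp_real_smul_of_isHermitian {m : ℕ} {H : Matrix (Fin m) (Fin m) ℂ} (hH : H.IsHermitian)
    (t : ℝ) :
    mexp ((t : ℂ) • H) = (hH.eigenvectorUnitary : Matrix (Fin m) (Fin m) ℂ) *
      diagonal (fun i => (Real.exp (t * hH.eigenvalues i) : ℂ)) *
      star (hH.eigenvectorUnitary : Matrix (Fin m) (Fin m) ℂ) := by
  set U := (hH.eigenvectorUnitary : Matrix (Fin m) (Fin m) ℂ)
  have hUinv : U⁻¹ = star U := inv_eq_left_inv (Unitary.star_mul_self_of_mem (SetLike.coe_mem _))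
  have hU : IsUnit U := ⟨⟨U, star U, Unitary.mul_star_self_of_mem (SetLike.coe_mem _),
    Unitary.star_mul_self_of_mem (SetLike.coe_mem _)⟩, rfl⟩
  have hH' : (t : ℂ) • H = U * diagonal (fun i => (t * hH.eigenvalues i : ℂ)) * U⁻¹ := by
    conv_lhs => rw [hH.spectral_theorem, Unitary.conjStarAlgAut_apply]
    rw [hUinv, ← Matrix.smul_mul, ← Matrix.mul_smul, ← diagonal_smul]
    rfl
  rw [mexp, hH', exp_conj _ _ hU, exp_diagonal, hUinv]
  congr 3
  funext i
  simp [← Complex.exp_eq_exp_ℂ, Complex.ofReal_exp]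

noncomputable def mulDiagonalOfReal {m n : ℕ} (B : Matrix (Fin n) (Fin m) ℂ) :
    (Fin m → ℝ) →ₗ[ℝ] Matrix (Fin n) (Fin m) ℂ where
  toFun r := B * diagonal fun j => (r j : ℂ)
  map_add' r s := by simp [← diagonal_add, Matrix.mul_add]
  map_smul' c r := by
    ext i j
    simp only [mul_diagonal, Pi.smul_apply, smul_eq_mul, Complex.ofReal_mul, RingHom.id_apply,
      Matrix.smul_apply, Complex.real_smul]
    ring

namespace IsUnitarilyInvariantNorm

variable {m n : ℕ} {N : Matrix (Fin n) (Fin m) ℂ → ℝ}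

noncomputable def toSeminorm (hN : IsUnitarilyInvariantNorm n m N) :
    Seminorm ℂ (Matrix (Fin n) (Fin m) ℂ) :=
  Seminorm.of N hN.triangle hN.smul

theorem map_mul_unitary (hN : IsUnitarilyInvariantNorm n m N) {W : Matrix (Fin m) (Fin m) ℂ}
    (hW : W ∈ unitaryGroup (Fin m) ℂ) (A : Matrix (Fin n) (Fin m) ℂ) : N (A * W) = N A := by
  simpa using hN.unitary_inv 1 W (one_mem _) hW A

noncomputable def mulDiagonalSeminorm (hN : IsUnitarilyInvariantNorm n m N)
    (B : Matrix (Fin n) (Fin m) ℂ) : Seminorm ℝ (Fin m → ℝ) :=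
  (hN.toSeminorm.restrictScalars ℝ).comp (mulDiagonalOfReal B)

theorem mulDiagonalSeminorm_apply (hN : IsUnitarilyInvariantNorm n m N)
    (B : Matrix (Fin n) (Fin m) ℂ) (r : Fin m → ℝ) :
    hN.mulDiagonalSeminorm B r = N (B * diagonal fun j => (r j : ℂ)) := rfl

theorem isAbsolute_mulDiagonalSeminorm (hN : IsUnitarilyInvariantNorm n m N)
    (B : Matrix (Fin n) (Fin m) ℂ) : (hN.mulDiagonalSeminorm B).IsAbsolute := by
  intro r s hrs
  let ε : Fin m → ℝ := fun i => if r i = s i then 1 else -1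
  have hε : ∀ i, |ε i| = 1 := fun i => by by_cases h : r i = s i <;> simp [ε, h]
  have hr : r = fun i => s i * ε i := funext fun i => by
    by_cases h : r i = s i
    · simp [ε, h]
    · simp only [ε, h, if_false, mul_neg_one]
      rcases abs_eq_abs.mp (hrs i) with h' | h'
      exacts [absurd h' h, h']
  rw [hr, mulDiagonalSeminorm_apply, mulDiagonalSeminorm_apply, ← hN.map_mul_unitary
    (diagonal_mem_unitaryGroup_of_abs_eq_one hε) (B * diagonal fun j => (s j : ℂ)),
    Matrix.mul_assoc, diagonal_mul_diagonal]
  simp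

theorem mulDiagonalSeminorm_pos (hN : IsUnitarilyInvariantNorm n m N)
    {B : Matrix (Fin n) (Fin m) ℂ} (hB : B ≠ 0) {r : Fin m → ℝ} (hr : ∀ i, r i ≠ 0) :
    0 < hN.mulDiagonalSeminorm B r := by
  refine (apply_nonneg _ _).lt_of_ne' fun h0 => hB ?_
  rw [mulDiagonalSeminorm_apply, hN.eq_zero_iff] at h0
  ext i j
  simpa [mul_diagonal, hr j] using congrFun₂ h0 i j

end IsUnitarilyInvariantNorm

section SmulL2

variable {ι V : Type*} [Fintype ι] [NormedAddCommGroup V] [NormedSpace ℝ V]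

noncomputable def smulL2Seminorm (g : ι → V) : Seminorm ℝ (ι → ℝ) :=
  (normSeminorm ℝ (PiLp 2 fun _ : ι => V)).comp
    ((WithLp.linearEquiv 2 ℝ (ι → V)).symm.toLinearMap ∘ₗ
      LinearMap.pi fun i => (LinearMap.proj i).smulRight (g i))

theorem smulL2Seminorm_apply (g : ι → V) (r : ι → ℝ) :
    smulL2Seminorm g r = √(∑ i, ‖r i • g i‖ ^ 2) := by
  simp [smulL2Seminorm, PiLp.norm_eq_of_L2]

theorem isAbsolute_smulL2Seminorm (g : ι → V) : (smulL2Seminorm g).IsAbsolute := by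
  intro r s hrs
  simp only [smulL2Seminorm_apply, norm_smul, Real.norm_eq_abs, hrs]

theorem smulL2Seminorm_pos {g : ι → V} (hg : g ≠ 0) {r : ι → ℝ} (hr : ∀ i, r i ≠ 0) :
    0 < smulL2Seminorm g r := by
  obtain ⟨i, hi⟩ := Function.ne_iff.mp hg
  rw [smulL2Seminorm_apply, Real.sqrt_pos]
  exact Finset.sum_pos' (fun _ _ => by positivity)
    ⟨i, Finset.mem_univ _, pow_pos (norm_pos_iff.mpr (smul_ne_zero (hr i) hi)) 2⟩

end SmulL2

/-- **Geodesic convexity of the local condition number under the shuffling action.**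
For a not-all-zero tuple `f` of vectors of a complex inner product space, a nonzero
matrix `J ∈ ℂ^{n×m}`, a unitarily invariant norm `‖·‖₂` on `ℂ^{n×m}` and a Hermitian `H`,
the function `t ↦ log ‖e^{tH}·f‖ + log ‖J e^{-tH}‖₂` is convex on `ℝ`,
where `‖f‖ = √(Σᵢ ‖fᵢ‖²)`. -/
theorem shuffling_local_condition_convex
    (V : Type*) [NormedAddCommGroup V] [InnerProductSpace ℂ V]
    (m n : ℕ) (f : Fin m → V) (hf : f ≠ 0)
    (J : Matrix (Fin n) (Fin m) ℂ) (hJ : J ≠ 0)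
    (N₂ : Matrix (Fin n) (Fin m) ℂ → ℝ) (hN₂ : IsUnitarilyInvariantNorm n m N₂)
    (H : Matrix (Fin m) (Fin m) ℂ) (hH : H.IsHermitian) :
    ConvexOn ℝ Set.univ (fun t : ℝ =>
      Real.log (Real.sqrt (∑ i, ‖shuffle (mexp ((t : ℂ) • H)) f i‖ ^ 2)) +
      Real.log (N₂ (J * mexp ((-t : ℂ) • H)))) := by
  obtain ⟨U, hU, hexp⟩ : ∃ U ∈ unitaryGroup (Fin m) ℂ, ∀ t : ℝ, mexp ((t : ℂ) • H) =
      U * diagonal (fun i => (Real.exp (t * hH.eigenvalues i) : ℂ)) * star U :=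
    ⟨_, SetLike.coe_mem _, mexp_real_smul_of_isHermitian hH⟩
  set g := shuffle (star U) f
  have hg : g ≠ 0 := fun h0 => hf <|
    calc f = shuffle (U * star U) f := by rw [mem_unitaryGroup_iff.mp hU, shuffle_one]
      _ = shuffle U g := shuffle_mul _ _ _
      _ = 0 := by rw [h0]; funext i; simp [shuffle]
  have hJU : J * U ≠ 0 := fun h0 => hJ <| by
    rw [← Matrix.mul_one J, ← mem_unitaryGroup_iff.mp hU, ← Matrix.mul_assoc, h0, Matrix.zero_mul]
  have hterm₁ : ∀ t : ℝ, √(∑ i, ‖shuffle (mexp ((t : ℂ) • H)) f i‖ ^ 2) =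
      smulL2Seminorm g fun i => Real.exp (t * hH.eigenvalues i) := fun t => by
    rw [smulL2Seminorm_apply, hexp, shuffle_mul, shuffle_mul,
      sum_norm_sq_shuffle_of_mem_unitaryGroup hU]
    simp only [shuffle_diagonal, norm_smul, Complex.norm_real, Real.norm_eq_abs, Real.abs_exp, g]
  have hterm₂ : ∀ t : ℝ, N₂ (J * mexp ((-t : ℂ) • H)) =
      hN₂.mulDiagonalSeminorm (J * U) fun i => Real.exp (t * -hH.eigenvalues i) := fun t => by
    rw [IsUnitarilyInvariantNorm.mulDiagonalSeminorm_apply, ← Complex.ofReal_neg, hexp,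
      ← Matrix.mul_assoc, ← Matrix.mul_assoc, hN₂.map_mul_unitary (Unitary.star_mem hU)]
    simp only [neg_mul, mul_neg]
  simp only [hterm₁, hterm₂]
  exact ((isAbsolute_smulL2Seminorm g).convexOn_log_exp _ fun t =>
      smulL2Seminorm_pos hg fun i => (Real.exp_pos _).ne').add
    ((hN₂.isAbsolute_mulDiagonalSeminorm _).convexOn_log_exp _ fun t =>
      hN₂.mulDiagonalSeminorm_pos hJU fun i => (Real.exp_pos _).ne')
end

section
/- Let n ≥ 1, let ξ ∈ ℂⁿ have all coordinates nonzero, and for i = 1,…,n let ωᵢ = n·eᵢ − 𝟙 ∈ ℤⁿ, where eᵢ is the i-th standard basis vector and 𝟙 the all-ones vector. Define h : (ℝ_{>0})ⁿ → ℝ by h(t) = log( Σᵢ₌₁ⁿ Πⱼ₌₁ⁿ (|ξⱼ|/tⱼ)^{ωᵢⱼ} ). Then: (a) for every v ∈ ℝⁿ and every t ∈ (ℝ_{>0})ⁿ, the map s ↦ h(e^{s v₁}t₁, …, e^{s vₙ}tₙ) is convex on ℝ (i.e., h is geodesically convex on (ℝ_{>0})ⁿ); and (b) every minimizer t of h on (ℝ_{>0})ⁿ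 satisfies |ξᵢ|·tᵢ⁻¹ = |ξⱼ|·tⱼ⁻¹ for all 1 ≤ i,j ≤ n. -/
/-!
Along the geodesic `s ↦ e^{s v} t` each monomial `∏ⱼ (|ξⱼ| / tⱼ) ^ ωᵢⱼ` becomes `Cᵢ e^{bᵢ s}`, so
`h` restricted to a geodesic is a log-sum-exp of affine functions, convex by Hölder's inequality.
With `aⱼ = |ξⱼ| / tⱼ` the `i`-th monomial is `aᵢⁿ / ∏ₖ aₖ`, so `e^{h t} = ∑ᵢ aᵢⁿ / ∏ₖ aₖ ≥ n` by
AM-GM, with equality exactly when all `aᵢ` agree. Since `h |ξ| = log n`, a minimizer attains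
equality.
-/

open Finset Real

theorem Real.exp_zpow (x : ℝ) (k : ℤ) : exp x ^ k = exp (k * x) := by
  rw [← rpow_intCast, ← exp_mul, mul_comm]

theorem Finset.prod_zpow_div_exp_mul {ι : Type*} (s : Finset ι) (ω : ι → ℤ) (a t v : ι → ℝ)
    (x : ℝ) :
    ∏ j ∈ s, (a j / (exp (x * v j) * t j)) ^ ω j
      = (∏ j ∈ s, (a j / t j) ^ ω j) * exp ((-∑ j ∈ s, ω j * v j) * x) := by
  have hterm : ∀ j, (a j / (exp (x * v j) * t j)) ^ ω j
      = (a j / t j) ^ ω j * exp (-(ω j * v j) * x) := fun j => by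
    rw [mul_comm (exp _), ← div_div, div_zpow, exp_zpow, div_eq_mul_inv, ← exp_neg]
    ring_nf
  rw [prod_congr rfl fun j _ => hterm j, prod_mul_distrib, ← exp_sum, ← sum_mul, sum_neg_distrib]

theorem Finset.sum_rpow_mul_rpow_le {ι : Type*} {s : Finset ι} (hs : s.Nonempty) {p q : ι → ℝ}
    (hp : ∀ i ∈ s, 0 < p i) (hq : ∀ i ∈ s, 0 < q i) {a b : ℝ}
    (ha : 0 ≤ a) (hb : 0 ≤ b) (hab : a + b = 1) :
    ∑ i ∈ s, p i ^ a * q i ^ b ≤ (∑ i ∈ s, p i) ^ a * (∑ i ∈ s, q i) ^ b := by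
  set P := ∑ i ∈ s, p i
  set Q := ∑ i ∈ s, q i
  have hP : 0 < P := sum_pos hp hs
  have hQ : 0 < Q := sum_pos hq hs
  calc ∑ i ∈ s, p i ^ a * q i ^ b
      = ∑ i ∈ s, P ^ a * Q ^ b * ((p i / P) ^ a * (q i / Q) ^ b) := by
        refine sum_congr rfl fun i hi => ?_
        rw [div_rpow (hp i hi).le hP.le, div_rpow (hq i hi).le hQ.le]
        field_simp
    _ ≤ ∑ i ∈ s, P ^ a * Q ^ b * (a * (p i / P) + b * (q i / Q)) := by
        gcongr with i hi
        exact geom_mean_le_arith_mean2_weighted ha hb (by positivity [hp i hi])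
          (by positivity [hq i hi]) hab
    _ = P ^ a * Q ^ b * (a * (P / P) + b * (Q / Q)) := by
        rw [← mul_sum, sum_add_distrib, ← mul_sum, ← mul_sum, ← sum_div, ← sum_div]
    _ = P ^ a * Q ^ b := by
        rw [div_self hP.ne', div_self hQ.ne', mul_one, mul_one, hab, mul_one]

theorem Real.convexOn_log_sum_mul_exp {ι : Type*} [Fintype ι] [Nonempty ι] {C : ι → ℝ}
    (hC : ∀ i, 0 < C i) (c : ι → ℝ) :
    ConvexOn ℝ Set.univ fun x : ℝ => log (∑ i, C i * exp (c i * x)) := by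
  have hterm_pos : ∀ x i, 0 < C i * exp (c i * x) := fun x i => by positivity [hC i]
  have hsum_pos : ∀ x, 0 < ∑ i, C i * exp (c i * x) := fun x =>
    sum_pos (fun i _ => hterm_pos x i) univ_nonempty
  refine ⟨convex_univ, fun x _ y _ a b ha hb hab => ?_⟩
  have hsplit : ∀ i, C i * exp (c i * (a * x + b * y))
      = (C i * exp (c i * x)) ^ a * (C i * exp (c i * y)) ^ b := fun i => by
    rw [mul_rpow (hC i).le (exp_pos _).le, mul_rpow (hC i).le (exp_pos _).le, ← exp_mul,
      ← exp_mul, mul_mul_mul_comm, ← rpow_add (hC i), hab, rpow_one, ← exp_add]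
    ring_nf
  have hholder := sum_rpow_mul_rpow_le univ_nonempty (fun i _ => hterm_pos x i)
    (fun i _ => hterm_pos y i) ha hb hab
  simp only [smul_eq_mul]
  calc log (∑ i, C i * exp (c i * (a * x + b * y)))
      ≤ log ((∑ i, C i * exp (c i * x)) ^ a * (∑ i, C i * exp (c i * y)) ^ b) :=
        log_le_log (hsum_pos _) (by simpa only [hsplit] using hholder)
    _ = a * log (∑ i, C i * exp (c i * x)) + b * log (∑ i, C i * exp (c i * y)) := by
        rw [log_mul (rpow_pos_of_pos (hsum_pos x) a).ne' (rpow_pos_of_pos (hsum_pos y) b).ne',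
          log_rpow (hsum_pos x), log_rpow (hsum_pos y)]

theorem Finset.prod_zpow_mul_ite_sub_one {ι : Type*} [Fintype ι] [DecidableEq ι] {u : ι → ℝ}
    (hu : ∀ k, u k ≠ 0) (m : ℕ) (i : ι) :
    ∏ k, u k ^ ((m : ℤ) * (if i = k then 1 else 0) - 1) = u i ^ m / ∏ k, u k := by
  have hterm : ∀ k, u k ^ ((m : ℤ) * (if i = k then 1 else 0) - 1)
      = (if i = k then u k ^ m else 1) * (u k)⁻¹ := fun k => by
    rw [zpow_sub₀ (hu k), zpow_one, div_eq_mul_inv]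
    split_ifs <;> simp
  rw [prod_congr rfl fun k _ => hterm k, prod_mul_distrib, prod_ite_eq, if_pos (mem_univ _),
    prod_inv_distrib, div_eq_mul_inv]

theorem Real.sum_pow_card_le_card_mul_prod_iff {ι : Type*} [Fintype ι] [Nonempty ι]
    {a : ι → ℝ} (ha : ∀ i, 0 ≤ a i) :
    ∑ i, a i ^ Fintype.card ι ≤ Fintype.card ι * ∏ i, a i ↔ ∀ i j, a i = a j := by
  set n := Fintype.card ι
  have hn : 0 < (n : ℝ) := by simp [n, Fintype.card_pos]
  have hamgm := geom_mean_lt_arith_mean_weighted_iff_of_pos univ (fun _ => (n : ℝ)⁻¹)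
    (fun i => a i ^ n) (fun _ _ => by positivity) (by simp [n]) (fun i _ => by positivity [ha i])
  have hgeom : ∏ i, (a i ^ n) ^ (n : ℝ)⁻¹ = ∏ i, a i :=
    prod_congr rfl fun i _ => pow_rpow_inv_natCast (ha i) Fintype.card_ne_zero
  have hpow_inj : ∀ i j, a i ^ n = a j ^ n ↔ a i = a j := fun i j =>
    pow_left_inj₀ (ha i) (ha j) Fintype.card_ne_zero
  simp only [hgeom, ← mul_sum, mem_univ, true_and, ne_eq, hpow_inj, lt_inv_mul_iff₀ hn] at hamgm
  rw [← not_lt, hamgm]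
  push Not
  rfl

/-- **Geodesic convexity and balancing property of the sparse-scaling penalty.**
With `ωᵢ = n·eᵢ − 𝟙 ∈ ℤⁿ` and `h(t) = log(Σᵢ Πⱼ (|ξⱼ|/tⱼ)^{ωᵢⱼ})` on `(ℝ_{>0})ⁿ`:
(a) `s ↦ h(e^{s v} t)` is convex on `ℝ` for every `v ∈ ℝⁿ` and positive `t`; and
(b) every minimizer `t` of `h` on `(ℝ_{>0})ⁿ` satisfies `|ξᵢ| tᵢ⁻¹ = |ξⱼ| tⱼ⁻¹` for all `i, j`. -/
theorem sparse_scaling_penalty_gconvex_and_balanced (n : ℕ) (hn : 1 ≤ n)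
    (ξ : Fin n → ℂ) (hξ : ∀ j, ξ j ≠ 0) :
    let ω : Fin n → Fin n → ℤ := fun i j => (n : ℤ) * (if i = j then 1 else 0) - 1
    let h : (Fin n → ℝ) → ℝ := fun t =>
      Real.log (∑ i, ∏ j, (‖ξ j‖ / t j) ^ ω i j)
    (∀ (v : Fin n → ℝ) (t : Fin n → ℝ), (∀ j, 0 < t j) →
      ConvexOn ℝ Set.univ (fun s : ℝ => h fun j => Real.exp (s * v j) * t j)) ∧
    (∀ t : Fin n → ℝ, (∀ j, 0 < t j) →
      (∀ t' : Fin n → ℝ, (∀ j, 0 < t' j) → h t ≤ h t') →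
      ∀ i j, ‖ξ i‖ * (t i)⁻¹ = ‖ξ j‖ * (t j)⁻¹) := by
  intro ω h
  have : Nonempty (Fin n) := Fin.pos_iff_nonempty.mp hn
  have hnorm : ∀ k, 0 < ‖ξ k‖ := fun k => norm_pos_iff.mpr (hξ k)
  refine ⟨fun v t ht => ?_, fun t ht hmin => ?_⟩
  · have hC : ∀ i, 0 < ∏ j, (‖ξ j‖ / t j) ^ ω i j := fun i =>
      prod_pos fun j _ => zpow_pos (div_pos (hnorm j) (ht j)) _
    simpa only [h, prod_zpow_div_exp_mul] using convexOn_log_sum_mul_exp hC _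
  · set a : Fin n → ℝ := fun k => ‖ξ k‖ / t k
    have ha : ∀ k, 0 < a k := fun k => div_pos (hnorm k) (ht k)
    have hquot : 0 < (∑ k, a k ^ n) / ∏ k, a k :=
      div_pos (sum_pos (fun k _ => pow_pos (ha k) n) univ_nonempty) (prod_pos fun k _ => ha k)
    have hval_t : h t = log ((∑ k, a k ^ n) / ∏ k, a k) := by
      simp only [h, ω, prod_zpow_mul_ite_sub_one fun k => (ha k).ne', sum_div, a]
    have hval_norm : h (fun k => ‖ξ k‖) = log n := by
      simp [h, fun k => div_self (hnorm k).ne']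
    have hle : ∑ k, a k ^ n ≤ n * ∏ k, a k := by
      have hmin_norm := hmin _ hnorm
      rwa [hval_t, hval_norm, log_le_log_iff hquot (Nat.cast_pos.mpr hn),
        div_le_iff₀ (prod_pos fun k _ => ha k)] at hmin_norm
    have hbalanced := (sum_pow_card_le_card_mul_prod_iff fun k => (ha k).le).mp
      (by simpa only [Fintype.card_fin] using hle)
    simpa only [a, div_eq_mul_inv] using hbalanced
end
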